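/- arXiv:2602.10292 — 6 statements merged into one kernel-verified Lean document; each statement's English description precedes it below -/
import Mathlib

section
/- Fix positive integers k and t with t < k. For every ε > 0 there exists n₀ such that for all n > n₀ and every integer ℓ with α(G(n,k,t)) < ℓ ≤ C(n,k), one has ρ_{n,k,t}(ℓ) ≤ (1+ε) · (ℓ²/n^t) · (t!/2) · C(k,t)². -/
/-- The number of unordered pairs of distinct sets `F₁, F₂ ∈ F` with `|F₁ ∩ F₂| = t`. -/
def rhoPairs (t : ℕ) (F : Finset (Finset ℕ)) : ℕ :=
  ((F.powersetCard 2).filter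
    (fun P => ∃ A ∈ P, ∃ B ∈ P, A ≠ B ∧ (A ∩ B).card = t)).card

/-- The independence number of the generalized Johnson graph `G(n,k,t)`. -/
def alphaJ (n k t : ℕ) : ℕ :=
  ((((Finset.Icc 1 n).powersetCard k).powerset).filter
    (fun F => ∀ A ∈ F, ∀ B ∈ F, A ≠ B → (A ∩ B).card ≠ t)).sup Finset.card

/-- `ρ_{n,k,t}(ℓ)`: the minimum of `ρ(F)` over families `F` of `k`-element subsets
of `[n]` with `|F| = ℓ`. -/
noncomputable def rhoMin (n k t ℓ : ℕ) : ℕ :=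
  sInf { m : ℕ | ∃ F : Finset (Finset ℕ),
    F ⊆ (Finset.Icc 1 n).powersetCard k ∧ F.card = ℓ ∧ rhoPairs t F = m }

/-!
Average over all `ℓ`-subfamilies of the `N = C(n,k)` vertices of `G(n,k,t)`: every edge lies in the
same fraction `C(ℓ,2) / C(N,2)` of them, so some `ℓ`-family spans at most `e · C(ℓ,2) / C(N,2)`
edges, where `2e ≤ N · C(k,t) · C(n-k,k-t)` because a `k`-set meets at most `C(k,t) · C(n-k,k-t)`
others in exactly `t` points. Hence `ρ(ℓ) · (N - 1) ≤ C(k,t) · C(n-k,k-t) · C(ℓ,2)`, and the bound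
follows from `C(n-k,k-t) ≤ n^(k-t) / (k-t)!` and `N ~ n^k / k!`.
-/

open Finset Nat

namespace Finset

variable {α : Type*} [DecidableEq α]

theorem card_filter_powersetCard_superset_le {S P : Finset α} (hPS : P ⊆ S) (ℓ : ℕ) :
    #{F ∈ S.powersetCard ℓ | P ⊆ F} ≤ (#S - #P).choose (ℓ - #P) := by
  rw [← card_sdiff_of_subset hPS, ← card_powersetCard]
  refine card_le_card_of_injOn (· \ P) (fun F hF => ?_) (fun F₁ hF₁ F₂ hF₂ h => ?_)
  · simp only [mem_coe, mem_filter, mem_powersetCard] at hF ⊢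
    exact ⟨sdiff_subset_sdiff hF.1.1 le_rfl, by rw [card_sdiff_of_subset hF.2, hF.1.2]⟩
  · simp only [mem_coe, mem_filter] at hF₁ hF₂
    rw [← sdiff_union_of_subset hF₁.2, ← sdiff_union_of_subset hF₂.2]
    exact congrArg (· ∪ P) h

theorem sum_card_filter_powersetCard_le (p : Finset α → Prop) [DecidablePred p] (S : Finset α)
    (m ℓ : ℕ) :
    ∑ F ∈ S.powersetCard ℓ, #{P ∈ F.powersetCard m | p P}
      ≤ #{P ∈ S.powersetCard m | p P} * (#S - m).choose (ℓ - m) := by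
  have h_sub (F) (hF : F ∈ S.powersetCard ℓ) :
      {P ∈ F.powersetCard m | p P} = {P ∈ {P ∈ S.powersetCard m | p P} | P ⊆ F} := by
    ext P
    simp only [mem_filter, mem_powersetCard] at hF ⊢
    exact ⟨fun h => ⟨⟨⟨h.1.1.trans hF.1, h.1.2⟩, h.2⟩, h.1.1⟩,
      fun h => ⟨⟨h.2, h.1.1.2⟩, h.1.2⟩⟩
  calc ∑ F ∈ S.powersetCard ℓ, #{P ∈ F.powersetCard m | p P}
      = ∑ F ∈ S.powersetCard ℓ, #{P ∈ {P ∈ S.powersetCard m | p P} | P ⊆ F} :=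
        sum_congr rfl fun F hF => by rw [h_sub F hF]
    _ = ∑ P ∈ {P ∈ S.powersetCard m | p P}, #{F ∈ S.powersetCard ℓ | P ⊆ F} := by
        simp only [card_filter]
        exact sum_comm
    _ ≤ ∑ _P ∈ {P ∈ S.powersetCard m | p P}, (#S - m).choose (ℓ - m) := by
        refine sum_le_sum fun P hP => ?_
        obtain ⟨hPS, hPm⟩ := mem_powersetCard.1 (mem_filter.1 hP).1
        exact hPm ▸ card_filter_powersetCard_superset_le hPS ℓ
    _ = _ := by rw [sum_const, smul_eq_mul]

theorem exists_subset_card_filter_powersetCard_mul_choose_le (p : Finset α → Prop)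
    [DecidablePred p] {S : Finset α} {ℓ : ℕ} (hℓ : ℓ ≤ #S) (m : ℕ) :
    ∃ F ⊆ S, #F = ℓ ∧
      #{P ∈ F.powersetCard m | p P} * (#S).choose m
        ≤ #{P ∈ S.powersetCard m | p P} * ℓ.choose m := by
  rcases lt_or_ge ℓ m with hℓm | hmℓ
  · obtain ⟨F, hFS, hF⟩ := exists_subset_card_eq hℓ
    refine ⟨F, hFS, hF, ?_⟩
    simp [powersetCard_eq_empty.2 (hF ▸ hℓm)]
  obtain ⟨F, hF, hFavg⟩ := exists_le_of_sum_le (powersetCard_nonempty.2 hℓ)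
    (f := fun F => #{P ∈ F.powersetCard m | p P} * (#S).choose ℓ)
    (g := fun _ => #{P ∈ S.powersetCard m | p P} * (#S - m).choose (ℓ - m)) <| by
      rw [← sum_mul, sum_const, card_powersetCard, smul_eq_mul, mul_comm]
      exact Nat.mul_le_mul_left _ (sum_card_filter_powersetCard_le p S m ℓ)
  obtain ⟨hFS, hFℓ⟩ := mem_powersetCard.1 hF
  refine ⟨F, hFS, hFℓ, Nat.le_of_mul_le_mul_right (c := (#S - m).choose (ℓ - m)) ?_
    (Nat.choose_pos (by omega))⟩
  calc #{P ∈ F.powersetCard m | p P} * (#S).choose m * (#S - m).choose (ℓ - m)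
      = #{P ∈ F.powersetCard m | p P} * (#S).choose ℓ * ℓ.choose m := by
        rw [mul_assoc, ← Nat.choose_mul hmℓ, mul_assoc]
    _ ≤ #{P ∈ S.powersetCard m | p P} * (#S - m).choose (ℓ - m) * ℓ.choose m :=
        Nat.mul_le_mul_right _ hFavg
    _ = _ := by ring

theorem two_mul_card_filter_powersetCard_two_le {r : α → α → Prop} [DecidableRel r]
    (hr : ∀ A B, r A B → r B A) {S : Finset α} {d : ℕ} (hd : ∀ A ∈ S, #{B ∈ S | r A B} ≤ d) :
    2 * #{P ∈ S.powersetCard 2 | ∃ A ∈ P, ∃ B ∈ P, A ≠ B ∧ r A B} ≤ #S * d := by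
  set E := {P ∈ S.powersetCard 2 | ∃ A ∈ P, ∃ B ∈ P, A ≠ B ∧ r A B}
  have h_edge (P) (hP : P ∈ E) : P ⊆ S ∧ #P = 2 := mem_powersetCard.1 (mem_filter.1 hP).1
  have h_deg (A) (hA : A ∈ S) : #{P ∈ E | A ∈ P} ≤ d := by
    refine (card_le_card (t := {B ∈ S | r A B}.image fun B => {A, B}) fun P hP => ?_).trans
      (card_image_le.trans (hd A hA))
    obtain ⟨hPE, hAP⟩ := mem_filter.1 hP
    obtain ⟨X, hX, Y, hY, hXY, hrXY⟩ := (mem_filter.1 hPE).2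
    have hP_eq : {X, Y} = P :=
      eq_of_subset_of_card_le (insert_subset hX (singleton_subset_iff.2 hY))
        (by rw [(h_edge P hPE).2, card_pair hXY])
    rw [mem_image]
    rw [← hP_eq, mem_insert, mem_singleton] at hAP
    rcases hAP with rfl | rfl
    · exact ⟨Y, mem_filter.2 ⟨(h_edge P hPE).1 hY, hrXY⟩, hP_eq⟩
    · exact ⟨X, mem_filter.2 ⟨(h_edge P hPE).1 hX, hr X A hrXY⟩, pair_comm A X ▸ hP_eq⟩
  calc 2 * #E = ∑ P ∈ E, #(S ∩ P) := by
        rw [sum_congr rfl fun P hP => by rw [inter_eq_right.2 (h_edge P hP).1, (h_edge P hP).2],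
          sum_const, smul_eq_mul, mul_comm]
    _ ≤ #S * d := sum_card_inter_le h_deg

theorem card_filter_card_inter_eq_le {U A : Finset α} (hAU : A ⊆ U) (j t : ℕ) :
    #{B ∈ U.powersetCard j | #(A ∩ B) = t} ≤ (#A).choose t * (#U - #A).choose (j - t) := by
  rw [← card_sdiff_of_subset hAU, ← card_powersetCard, ← card_powersetCard, ← card_product]
  refine card_le_card_of_injOn (fun B => (A ∩ B, B \ A)) (fun B hB => ?_)
    (fun B₁ _ B₂ _ h => ?_)
  · simp only [mem_coe, mem_filter, mem_powersetCard, mem_product] at hB ⊢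
    refine ⟨⟨inter_subset_left, hB.2⟩, sdiff_subset_sdiff hB.1.1 le_rfl, ?_⟩
    rw [card_sdiff, hB.1.2, hB.2]
  · simp only [Prod.mk.injEq] at h
    rw [← sdiff_union_inter B₁ A, ← sdiff_union_inter B₂ A, inter_comm B₁, inter_comm B₂, h.1, h.2]

end Finset

open Asymptotics Filter

theorem eventually_pow_div_factorial_le_mul_choose_sub_one {k : ℕ} (hk : 0 < k) {c : ℝ}
    (hc : 1 < c) : ∀ᶠ n : ℕ in atTop, (n : ℝ) ^ k / k ! ≤ c * ((n.choose k : ℝ) - 1) := by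
  set u : ℕ → ℝ := fun n => (n.choose k : ℝ) - 1
  set v : ℕ → ℝ := fun n => (n : ℝ) ^ k / (k ! : ℝ)
  have h_one : (fun _ => (1 : ℝ)) =o[atTop] v := by
    rw [isLittleO_one_left_iff]
    exact tendsto_norm_atTop_atTop.comp <|
      ((tendsto_pow_atTop hk.ne').comp tendsto_natCast_atTop_atTop).atTop_div_const (by positivity)
  have h_equiv : v ~[atTop] u := ((isEquivalent_choose k).sub_isLittleO h_one).symm
  filter_upwards [((isBigOWith_refl u atTop).add_isLittleO h_equiv hc).bound,
    eventually_ge_atTop k] with n h_bound hkn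
  have hu : 0 ≤ u n := sub_nonneg.2 (by exact_mod_cast Nat.choose_pos hkn)
  simpa [u, v, abs_of_nonneg hu] using (le_abs_self _).trans h_bound

theorem eventually_choose_sub_mul_pow_le {k t : ℕ} (hk : 0 < k) (htk : t ≤ k) {ε : ℝ}
    (hε : 0 < ε) :
    ∀ᶠ n : ℕ in atTop, ((n - k).choose (k - t) : ℝ) * n ^ t
      ≤ (1 + ε) * t ! * k.choose t * ((n.choose k : ℝ) - 1) := by
  filter_upwards [eventually_pow_div_factorial_le_mul_choose_sub_one hk
    (show 1 < 1 + ε by linarith)] with n hn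
  have h_fact : (k ! : ℝ) = k.choose t * t ! * (k - t)! := by
    exact_mod_cast (Nat.choose_mul_factorial_mul_factorial htk).symm
  have h_choose : ((n - k).choose (k - t) : ℝ) ≤ (n : ℝ) ^ (k - t) / (k - t)! :=
    (Nat.choose_le_pow_div _ _).trans (by gcongr; exact_mod_cast Nat.sub_le n k)
  calc ((n - k).choose (k - t) : ℝ) * n ^ t ≤ (n : ℝ) ^ (k - t) / (k - t)! * n ^ t := by gcongr
    _ = t ! * k.choose t * ((n : ℝ) ^ k / k !) := by
        have : (k.choose t : ℝ) ≠ 0 := by exact_mod_cast (Nat.choose_pos htk).ne'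
        rw [h_fact, ← pow_sub_mul_pow _ htk]
        field_simp
    _ ≤ t ! * k.choose t * ((1 + ε) * ((n.choose k : ℝ) - 1)) := by gcongr
    _ = (1 + ε) * t ! * k.choose t * ((n.choose k : ℝ) - 1) := by ring

theorem two_mul_rhoPairs_powersetCard_Icc_le (n k t : ℕ) :
    2 * rhoPairs t ((Icc 1 n).powersetCard k)
      ≤ n.choose k * (k.choose t * (n - k).choose (k - t)) := by
  have hS : #((Icc 1 n).powersetCard k) = n.choose k := by simp
  rw [rhoPairs, ← hS]
  refine two_mul_card_filter_powersetCard_two_le (r := fun A B => #(A ∩ B) = t)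
    (fun A B h => by rwa [inter_comm]) fun A hA => ?_
  obtain ⟨hA, hAk⟩ := mem_powersetCard.1 hA
  simpa [hAk] using card_filter_card_inter_eq_le hA k t

theorem rhoMin_mul_choose_sub_one_le {n k ℓ : ℕ} (t : ℕ) (hℓ : ℓ ≤ n.choose k) :
    rhoMin n k t ℓ * (n.choose k - 1) ≤ k.choose t * (n - k).choose (k - t) * ℓ.choose 2 := by
  have hS : #((Icc 1 n).powersetCard k) = n.choose k := by simp
  obtain ⟨F, hFS, hFℓ, hF⟩ := exists_subset_card_filter_powersetCard_mul_choose_le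
    (fun P => ∃ A ∈ P, ∃ B ∈ P, A ≠ B ∧ #(A ∩ B) = t) (hS ▸ hℓ) 2
  change rhoPairs t F * _ ≤ rhoPairs t _ * _ at hF
  have hρF : rhoMin n k t ℓ ≤ rhoPairs t F := Nat.sInf_le ⟨F, hFS, hFℓ, rfl⟩
  have h_edges := two_mul_rhoPairs_powersetCard_Icc_le n k t
  rw [hS] at hF
  generalize n.choose k = N at hF h_edges ⊢
  obtain _ | M := N
  · simp
  refine Nat.le_of_mul_le_mul_left ?_ M.succ_pos
  have h_pairs : (M + 1) * M = (M + 1).choose 2 * 2 := by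
    simpa using Nat.add_one_mul_choose_eq M 1
  calc (M + 1) * (rhoMin n k t ℓ * (M + 1 - 1))
      = rhoMin n k t ℓ * ((M + 1).choose 2 * 2) := by
        rw [Nat.add_sub_cancel, ← h_pairs]
        ring
    _ ≤ rhoPairs t F * ((M + 1).choose 2 * 2) := by gcongr
    _ = 2 * (rhoPairs t F * (M + 1).choose 2) := by ring
    _ ≤ 2 * (rhoPairs t ((Icc 1 n).powersetCard k) * ℓ.choose 2) := by gcongr
    _ ≤ (M + 1) * (k.choose t * (n - k).choose (k - t) * ℓ.choose 2) := by
        rw [← mul_assoc, ← mul_assoc]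
        exact Nat.mul_le_mul_right _ h_edges

theorem cast_rhoMin_mul_choose_sub_one_le {n k ℓ : ℕ} (t : ℕ) (hℓ : ℓ ≤ n.choose k) :
    (rhoMin n k t ℓ : ℝ) * ((n.choose k : ℝ) - 1)
      ≤ k.choose t * (n - k).choose (k - t) * ((ℓ : ℝ) ^ 2 / 2) := by
  obtain hN | hN := Nat.eq_zero_or_pos (n.choose k)
  · rw [hN, Nat.cast_zero, zero_sub, mul_neg_one]
    exact (neg_nonpos.2 (by positivity)).trans (by positivity)
  calc (rhoMin n k t ℓ : ℝ) * ((n.choose k : ℝ) - 1)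
      = ((rhoMin n k t ℓ * (n.choose k - 1) : ℕ) : ℝ) := by push_cast [Nat.cast_sub hN]; rfl
    _ ≤ ((k.choose t * (n - k).choose (k - t) * ℓ.choose 2 : ℕ) : ℝ) := by
        exact_mod_cast rhoMin_mul_choose_sub_one_le t hℓ
    _ ≤ k.choose t * (n - k).choose (k - t) * ((ℓ : ℝ) ^ 2 / 2) := by
        push_cast
        gcongr
        simpa using Nat.choose_le_pow_div (α := ℝ) 2 ℓ

theorem rho_upper_averaging_general (k t : ℕ) (htk : t < k) :
    ∀ ε : ℝ, 0 < ε → ∃ n₀ : ℕ, ∀ n > n₀, ∀ ℓ : ℕ,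
      alphaJ n k t < ℓ → ℓ ≤ n.choose k →
      (rhoMin n k t ℓ : ℝ) ≤
        (1 + ε) * ((ℓ : ℝ) ^ 2 / (n : ℝ) ^ t) * ((t.factorial : ℝ) / 2)
          * ((k.choose t : ℝ)) ^ 2 := by
  intro ε hε
  obtain ⟨n₀, hn₀⟩ := eventually_atTop.1 <|
    (eventually_choose_sub_mul_pow_le (by omega) htk.le hε).and (eventually_gt_atTop k)
  refine ⟨n₀, fun n hn ℓ _ hℓ => ?_⟩
  obtain ⟨h_asymp, hkn⟩ := hn₀ n hn.le
  have hN : (1 : ℝ) < n.choose k := by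
    have := Nat.choose_le_choose k hkn
    rw [Nat.choose_succ_self_right] at this
    exact_mod_cast (by omega : 1 < n.choose k)
  have hn_pos : (0 : ℝ) < (n : ℝ) ^ t := pow_pos (by exact_mod_cast (by omega : 0 < n)) t
  rw [← mul_le_mul_iff_of_pos_right (mul_pos (sub_pos.2 hN) hn_pos)]
  calc (rhoMin n k t ℓ : ℝ) * (((n.choose k : ℝ) - 1) * n ^ t)
      = rhoMin n k t ℓ * ((n.choose k : ℝ) - 1) * n ^ t := by ring
    _ ≤ k.choose t * (n - k).choose (k - t) * ((ℓ : ℝ) ^ 2 / 2) * n ^ t :=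
        mul_le_mul_of_nonneg_right (cast_rhoMin_mul_choose_sub_one_le t hℓ) hn_pos.le
    _ = k.choose t * ((ℓ : ℝ) ^ 2 / 2) * ((n - k).choose (k - t) * n ^ t) := by ring
    _ ≤ k.choose t * ((ℓ : ℝ) ^ 2 / 2)
          * ((1 + ε) * t ! * k.choose t * ((n.choose k : ℝ) - 1)) := by gcongr
    _ = _ := by field_simp

/-- Averaging upper bound: `ρ(ℓ) ≤ (1+o(1)) ⋅ (ℓ²/nᵗ) ⋅ (t!/2) ⋅ C(k,t)²`. -/
theorem rho_upper_averaging (k t : ℕ) (ht : 0 < t) (htk : t < k) :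
    ∀ ε : ℝ, 0 < ε → ∃ n₀ : ℕ, ∀ n > n₀, ∀ ℓ : ℕ,
      alphaJ n k t < ℓ → ℓ ≤ n.choose k →
      (rhoMin n k t ℓ : ℝ) ≤
        (1 + ε) * ((ℓ : ℝ) ^ 2 / (n : ℝ) ^ t) * ((t.factorial : ℝ) / 2)
          * ((k.choose t : ℝ)) ^ 2 :=
  rho_upper_averaging_general k t htk
end

section
/- Fix positive integers k and t with k ≥ 2t+1. For every ε > 0 there exist constants C > 0, δ > 0 and n₀ such that for all n > n₀ and every integer ℓ with C·n^{k-t-1} ≤ ℓ ≤ δ·n^{k-t}, one has ρ_{n,k,t}(ℓ) ≤ (1+ε) · (ℓ²/n^t) · (t!/2) · C(k-t-1,t)². -/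
/-!
Write `a = k - t - 1`. Reserve a prefix of `[n]` of length `θ n` and cut it into consecutive
blocks `D i` of size `t + 1`; let `G` be the remaining `m ≈ (1 - θ) n` points. The family of all
`D i ∪ S` with `S` an `a`-subset of `G`, over `s ≈ ℓ / C(m, a)` blocks, contains `ℓ` sets. Two of
them through the same block share at least `t + 1` points, so a `t`-neighbour of `D i ∪ S` is some
`D j ∪ S'` with `j ≠ i` and `|S ∩ S'| = t`, and there are at most `s C(a, t) C(m, a - t)` of those.
Since `C(m, a - t) / C(m, a) ≈ a! / ((a - t)! n^t) = t! C(a, t) / n^t` when `θ` is small, halving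
the degree sum gives the bound. The lower bound on `ℓ` makes the rounding of `s` negligible, the
upper bound makes the `s` blocks fit into the reserved prefix.
-/

open Finset

lemma rhoMin_le_rhoPairs {n k t : ℕ} {F : Finset (Finset ℕ)}
    (hF : F ⊆ (Icc 1 n).powersetCard k) : rhoMin n k t #F ≤ rhoPairs t F :=
  Nat.sInf_le ⟨F, hF, rfl, rfl⟩

lemma rhoPairs_mul_two_le {t B : ℕ} {F : Finset (Finset ℕ)}
    (hB : ∀ A ∈ F, #{X ∈ F | A ≠ X ∧ #(A ∩ X) = t} ≤ B) :
    rhoPairs t F * 2 ≤ #F * B := by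
  refine card_mul_le_card_mul (fun P A => A ∈ P) (fun P hP => ?_) (fun A hA => ?_)
  · obtain ⟨hPF, hP2⟩ := mem_powersetCard.mp (mem_filter.mp hP).1
    rw [bipartiteAbove, filter_mem_eq_inter, inter_eq_right.mpr hPF, hP2]
  · refine (card_le_card_of_surjOn (s := {X ∈ F | A ≠ X ∧ #(A ∩ X) = t})
      (fun X => {A, X}) ?_).trans (hB A hA)
    intro P hP
    obtain ⟨hP, hAP⟩ := mem_filter.mp hP
    obtain ⟨hPF2, X, hX, Y, hY, hXY, hXYt⟩ := mem_filter.mp hP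
    obtain ⟨hPF, hP2⟩ := mem_powersetCard.mp hPF2
    have hPXY : P = {X, Y} :=
      (eq_of_subset_of_card_le (insert_subset hX (singleton_subset_iff.mpr hY))
        (by rw [hP2, card_pair hXY])).symm
    subst hPXY
    simp only [mem_insert, mem_singleton] at hAP
    rcases hAP with rfl | rfl
    · exact ⟨Y, mem_filter.mpr ⟨hPF hY, hXY, hXYt⟩, rfl⟩
    · exact ⟨X, mem_filter.mpr ⟨hPF hX, hXY.symm, by rwa [inter_comm]⟩, pair_comm _ _⟩

section BlockFamily

variable {α ι : Type*} [DecidableEq α]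

lemma union_inter_eq_of_disjoint {D S G : Finset α} (hDG : Disjoint D G) (hSG : S ⊆ G) :
    (D ∪ S) ∩ G = S := by
  rw [union_inter_distrib_right, disjoint_iff_inter_eq_empty.mp hDG, inter_eq_left.mpr hSG,
    empty_union]

def blockFamily (D : ι → Finset α) (G : Finset α) (a : ℕ) (I : Finset ι) :
    Finset (Finset α) :=
  (I ×ˢ G.powersetCard a).image fun p => D p.1 ∪ p.2

variable {D : ι → Finset α} {G : Finset α} {a : ℕ} {I : Finset ι}

lemma mem_blockFamily {X : Finset α} :
    X ∈ blockFamily D G a I ↔ ∃ i ∈ I, ∃ S ⊆ G, #S = a ∧ D i ∪ S = X := by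
  simp [blockFamily, and_assoc]

lemma card_blockFamily (hD : (I : Set ι).PairwiseDisjoint D) (hne : ∀ i ∈ I, (D i).Nonempty)
    (hDG : ∀ i ∈ I, Disjoint (D i) G) :
    #(blockFamily D G a I) = #I * (#G).choose a := by
  rw [blockFamily, card_image_of_injOn, card_product, card_powersetCard]
  rintro ⟨i, S⟩ hiS ⟨j, S'⟩ hjS' h
  simp only [coe_product, Set.mem_prod, mem_coe, mem_powersetCard] at hiS hjS' h
  have hS : S = S' := by
    rw [← union_inter_eq_of_disjoint (hDG i hiS.1) hiS.2.1,
      ← union_inter_eq_of_disjoint (hDG j hjS'.1) hjS'.2.1, h]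
  subst hS
  have hDij : D i = D j := by
    rw [← union_sdiff_cancel_right ((hDG i hiS.1).mono_right hiS.2.1),
      ← union_sdiff_cancel_right ((hDG j hjS'.1).mono_right hiS.2.1), h]
  obtain ⟨x, hx⟩ := hne i hiS.1
  rw [hD.elim_finset hiS.1 hjS'.1 x hx (hDij ▸ hx)]

lemma blockFamily_subset_powersetCard {U : Finset α} {d : ℕ}
    (hDU : ∀ i ∈ I, D i ⊆ U) (hDd : ∀ i ∈ I, #(D i) = d)
    (hDG : ∀ i ∈ I, Disjoint (D i) G) (hGU : G ⊆ U) :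
    blockFamily D G a I ⊆ U.powersetCard (d + a) := by
  intro X hX
  obtain ⟨i, hi, S, hSG, hSa, rfl⟩ := mem_blockFamily.mp hX
  rw [mem_powersetCard, card_union_of_disjoint ((hDG i hi).mono_right hSG), hDd i hi, hSa]
  exact ⟨union_subset (hDU i hi) (hSG.trans hGU), rfl⟩

lemma union_inter_union_of_disjoint {D D' S S' : Finset α} (hD : Disjoint D D')
    (hDS' : Disjoint D S') (hD'S : Disjoint D' S) :
    (D ∪ S) ∩ (D' ∪ S') = S ∩ S' := by
  ext x
  simp only [mem_inter, mem_union]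
  have h₁ : x ∈ D → x ∉ D' := fun h => disjoint_left.mp hD h
  have h₂ : x ∈ D → x ∉ S' := fun h => disjoint_left.mp hDS' h
  have h₃ : x ∈ D' → x ∉ S := fun h => disjoint_left.mp hD'S h
  tauto

lemma card_filter_inter_eq_blockFamily_le {t : ℕ} (hD : (I : Set ι).PairwiseDisjoint D)
    (hDt : ∀ i ∈ I, t < #(D i)) (hDG : ∀ i ∈ I, Disjoint (D i) G) {X : Finset α}
    (hX : X ∈ blockFamily D G a I) :
    #{Y ∈ blockFamily D G a I | X ≠ Y ∧ #(X ∩ Y) = t} ≤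
      #I * (a.choose t * (#G).choose (a - t)) := by
  obtain ⟨i, hi, S, hSG, hSa, rfl⟩ := mem_blockFamily.mp hX
  calc _ ≤ #((I ×ˢ (S.powersetCard t ×ˢ G.powersetCard (a - t))).image
          fun p => D p.1 ∪ (p.2.1 ∪ p.2.2)) := by
        refine card_le_card fun Y hY => ?_
        obtain ⟨hY, -, hXY⟩ := mem_filter.mp hY
        obtain ⟨j, hj, S', hS'G, hS'a, rfl⟩ := mem_blockFamily.mp hY
        have hij : i ≠ j := by
          rintro rfl
          have := card_le_card (subset_inter subset_union_left subset_union_left :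
            D i ⊆ (D i ∪ S) ∩ (D i ∪ S'))
          have := hDt i hi
          omega
        rw [union_inter_union_of_disjoint (hD hi hj hij) ((hDG i hi).mono_right hS'G)
          ((hDG j hj).mono_right hSG)] at hXY
        refine mem_image.mpr ⟨(j, S ∩ S', S' \ S), ?_, ?_⟩
        · simp only [mem_product, mem_powersetCard]
          refine ⟨hj, ⟨inter_subset_left, hXY⟩, sdiff_subset.trans hS'G, ?_⟩
          rw [card_sdiff, hXY, hS'a]
        · show D j ∪ (S ∩ S' ∪ S' \ S) = D j ∪ S'
          rw [inter_comm, union_comm (S' ∩ S), sdiff_union_inter]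
    _ ≤ #(I ×ˢ (S.powersetCard t ×ˢ G.powersetCard (a - t))) := card_image_le
    _ = _ := by rw [card_product, card_product, card_powersetCard, card_powersetCard, hSa]

end BlockFamily

lemma pow_le_one_add_mul_pow {a : ℕ} {x y z : ℝ} (hx : 0 ≤ x) (hy : 0 ≤ y) (hy1 : y ≤ 1)
    (hay : a * y ≤ 1 / 2) (hz : (1 - y) * x ≤ z) : x ^ a ≤ (1 + 2 * a * y) * z ^ a := by
  have hbern : 1 - a * y ≤ (1 - y) ^ a := by
    simpa [sub_eq_add_neg] using one_add_mul_le_pow (a := -y) (by linarith) a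
  have hxa : x ^ a * (1 - a * y) ≤ z ^ a :=
    calc x ^ a * (1 - a * y) ≤ x ^ a * (1 - y) ^ a := by gcongr
      _ = ((1 - y) * x) ^ a := by rw [mul_pow, mul_comm]
      _ ≤ z ^ a := pow_le_pow_left₀ (by nlinarith) hz a
  have hay0 : 0 ≤ a * y := by positivity
  have : 0 ≤ x ^ a := by positivity
  nlinarith [mul_le_mul_of_nonneg_left hxa (by linarith : (0 : ℝ) ≤ 1 + 2 * a * y),
    mul_nonneg (mul_nonneg hay0 (by linarith : (0 : ℝ) ≤ 1 - 2 * a * y)) this]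

lemma pow_le_one_add_mul_factorial_mul_choose {a m : ℕ} {x y : ℝ} (hx : 0 ≤ x) (hy : 0 ≤ y)
    (hy1 : y ≤ 1) (hay : a * y ≤ 1 / 2) (hm : (1 - y) * x ≤ ((m + 1 - a : ℕ) : ℝ)) :
    x ^ a ≤ (1 + 2 * a * y) * (a.factorial * m.choose a) := by
  refine (pow_le_one_add_mul_pow hx hy hy1 hay hm).trans ?_
  gcongr
  exact_mod_cast (Nat.pow_sub_le_descFactorial m a).trans_eq
    (Nat.descFactorial_eq_factorial_mul_choose m a)

lemma factorial_mul_choose_le_pow {m n : ℕ} (b : ℕ) (hmn : m ≤ n) :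
    b.factorial * m.choose b ≤ n ^ b := by
  rw [← Nat.descFactorial_eq_factorial_mul_choose]
  exact (Nat.descFactorial_le_pow m b).trans (Nat.pow_le_pow_left hmn b)

lemma mul_le_one_add_mul_of_le_div_add_one {ε A N X ℓ s : ℝ} (hN : 0 < N) (hX : 0 ≤ X)
    (hℓ : 0 ≤ ℓ) (hXN : X ≤ (1 + ε / 2) * A * N) (hXℓ : 2 * X ≤ ε * A * ℓ)
    (hs : s ≤ ℓ / N + 1) : s * X ≤ (1 + ε) * A * ℓ := by
  have hℓX : ℓ / N * X ≤ (1 + ε / 2) * A * ℓ := by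
    rw [div_mul_eq_mul_div, div_le_iff₀ hN]
    nlinarith
  nlinarith

def block (d i : ℕ) : Finset ℕ := Ioc (i * d) (i * d + d)

lemma card_block (d i : ℕ) : #(block d i) = d := by
  simp [block]

lemma pairwiseDisjoint_block (d : ℕ) (s : Set ℕ) : s.PairwiseDisjoint (block d) := by
  intro i _ j _ hij
  wlog h : i < j generalizing i j
  · exact (this ‹_› ‹_› hij.symm (by omega)).symm
  have hij : i * d + d ≤ j * d := by nlinarith
  rw [Function.onFun, disjoint_left]
  intro x hx hx'
  simp only [block, mem_Ioc] at hx hx'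
  omega

lemma block_subset_Ioc {d s i : ℕ} (hi : i < s) : block d i ⊆ Ioc 0 (s * d) := by
  have : i * d + d ≤ s * d := by nlinarith
  intro x hx
  simp only [block, mem_Ioc] at hx ⊢
  omega

lemma rhoMin_mul_two_le {n t a P s ℓ : ℕ} (hsP : s * (t + 1) ≤ P) (hPn : P ≤ n)
    (hℓ : ℓ ≤ s * (n - P).choose a) :
    rhoMin n (t + 1 + a) t ℓ * 2 ≤ ℓ * (s * (a.choose t * (n - P).choose (a - t))) := by
  set F := blockFamily (block (t + 1)) (Ioc P n) a (range s)
  have hdisj : ∀ i ∈ range s, Disjoint (block (t + 1) i) (Ioc P n) := fun i hi =>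
    disjoint_left.mpr fun x hx hx' => by
      have := block_subset_Ioc (mem_range.mp hi) hx
      simp only [mem_Ioc] at this hx'
      omega
  have hcard : #F = s * (n - P).choose a := by
    rw [card_blockFamily (pairwiseDisjoint_block _ _)
      (fun i _ => card_pos.mp (by rw [card_block]; omega)) hdisj, card_range, Nat.card_Ioc]
  obtain ⟨F', hF'F, rfl⟩ := exists_subset_card_eq (hcard ▸ hℓ)
  have hFsub : F ⊆ (Icc 1 n).powersetCard (t + 1 + a) := by
    refine blockFamily_subset_powersetCard (fun i hi => ?_) (fun i _ => card_block _ i) hdisj ?_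
    · intro x hx
      have := block_subset_Ioc (mem_range.mp hi) hx
      simp only [mem_Ioc, mem_Icc] at this ⊢
      omega
    · intro x hx
      simp only [mem_Ioc, mem_Icc] at hx ⊢
      omega
  refine (Nat.mul_le_mul_right 2 (rhoMin_le_rhoPairs (hF'F.trans hFsub))).trans
    (rhoPairs_mul_two_le fun X hX => ?_)
  refine (card_le_card (filter_subset_filter _ hF'F)).trans ?_
  rw [← card_range s, ← Nat.card_Ioc P n]
  exact card_filter_inter_eq_blockFamily_le (pairwiseDisjoint_block _ _)
    (fun i _ => by rw [card_block]; omega) hdisj (hF'F hX)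

lemma pos_of_pow_le_mul {n a N : ℕ} {c : ℝ} (hn : 0 < n) (h : (n : ℝ) ^ a ≤ c * N) : 0 < N :=
  Nat.pos_of_ne_zero fun hN => by
    rw [hN, Nat.cast_zero, mul_zero] at h
    exact (pow_pos (Nat.cast_pos.mpr hn) a).not_ge h

lemma rhoMin_le_of_reserve {n t a P ℓ : ℕ} {ε : ℝ} (hta : t ≤ a) (hn : 0 < n) (hPn : P ≤ n)
    (hN : (n : ℝ) ^ a ≤ (1 + ε / 2) * (a.factorial * (n - P).choose a))
    (hℓ : 2 * (n : ℝ) ^ a ≤ ε * a.factorial * ℓ)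
    (hs : (ℓ / (n - P).choose a + 1) * (t + 1) ≤ P) :
    (rhoMin n (t + 1 + a) t ℓ : ℝ) ≤
      (1 + ε) * ((ℓ : ℝ) ^ 2 / (n : ℝ) ^ t) * ((t.factorial : ℝ) / 2) * (a.choose t : ℝ) ^ 2 := by
  set ρ := rhoMin n (t + 1 + a) t ℓ
  set N := (n - P).choose a
  set s := ℓ / N + 1
  set c := a.choose t
  set M := (n - P).choose (a - t)
  set f := (a - t).factorial
  have hN0 : 0 < N := pos_of_pow_le_mul hn (hN.trans_eq (mul_assoc _ _ _).symm)
  have hρ : (ρ : ℝ) * 2 ≤ ℓ * (s * (c * M)) := by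
    exact_mod_cast rhoMin_mul_two_le hs hPn
      (by simpa only [s, add_one_mul] using (Nat.lt_div_mul_add hN0).le)
  have hfact : (c * t.factorial * f : ℝ) = a.factorial := by
    exact_mod_cast Nat.choose_mul_factorial_mul_factorial hta
  have hM : (f * M : ℝ) ≤ (n : ℝ) ^ (a - t) := by
    exact_mod_cast factorial_mul_choose_le_pow (a - t) (Nat.sub_le n P)
  have hsN : (s : ℝ) * (n : ℝ) ^ a ≤ (1 + ε) * a.factorial * ℓ :=
    mul_le_one_add_mul_of_le_div_add_one (N := N) (by exact_mod_cast hN0) (by positivity)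
      (by positivity) (by linarith) hℓ
      (by push_cast [s]; linarith [Nat.cast_div_le (α := ℝ) (m := ℓ) (n := N)])
  have hpow : (n : ℝ) ^ (a - t) * (n : ℝ) ^ t = (n : ℝ) ^ a := by
    rw [← pow_add, Nat.sub_add_cancel hta]
  have hf : (f : ℝ) ≠ 0 := Nat.cast_ne_zero.mpr (Nat.factorial_ne_zero _)
  have hRHS : (1 + ε) * ((ℓ : ℝ) ^ 2 / (n : ℝ) ^ t) * ((t.factorial : ℝ) / 2) * (c : ℝ) ^ 2
      = (1 + ε) * a.factorial * ℓ * (ℓ * c) / (2 * (n : ℝ) ^ t * f) := by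
    rw [← hfact]; field_simp
  rw [hRHS, le_div_iff₀ (by positivity)]
  calc (ρ : ℝ) * (2 * (n : ℝ) ^ t * f) = ρ * 2 * ((n : ℝ) ^ t * f) := by ring
    _ ≤ ℓ * (s * (c * M)) * ((n : ℝ) ^ t * f) := by gcongr
    _ = ℓ * c * s * ((f * M) * (n : ℝ) ^ t) := by ring
    _ ≤ ℓ * c * s * ((n : ℝ) ^ (a - t) * (n : ℝ) ^ t) := by gcongr
    _ = ℓ * c * (s * (n : ℝ) ^ a) := by rw [hpow]; ring
    _ ≤ ℓ * c * ((1 + ε) * a.factorial * ℓ) := by gcongr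
    _ = (1 + ε) * a.factorial * ℓ * (ℓ * c) := by ring

lemma pow_le_factorial_mul_choose_sub_floor {a n : ℕ} {θ : ℝ} (hθ : 0 ≤ θ)
    (haθ : 4 * (a + 1) * θ ≤ 1) (hn : a ≤ θ * n) :
    (n : ℝ) ^ a ≤ (1 + 4 * a * θ) * (a.factorial * (n - ⌊θ * n⌋₊).choose a) := by
  have hθ2 : 2 * θ ≤ 1 / 2 := by nlinarith [(Nat.cast_nonneg a : (0 : ℝ) ≤ a)]
  have hP : (⌊θ * n⌋₊ : ℝ) ≤ θ * n := Nat.floor_le (by positivity)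
  have hPa : ⌊θ * n⌋₊ + a ≤ n := by
    have : (⌊θ * n⌋₊ + a : ℝ) ≤ n := by nlinarith [(Nat.cast_nonneg n : (0 : ℝ) ≤ n)]
    exact_mod_cast this
  convert pow_le_one_add_mul_factorial_mul_choose (a := a) (m := n - ⌊θ * n⌋₊) (y := 2 * θ)
    (Nat.cast_nonneg n) (by positivity) (by linarith) (by nlinarith) ?_ using 2
  · ring
  · rw [Nat.cast_sub (by omega), Nat.cast_add, Nat.cast_sub (by omega)]
    push_cast
    nlinarith [(Nat.cast_nonneg n : (0 : ℝ) ≤ n)]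

lemma div_add_one_mul_le_floor {a n t ℓ N : ℕ} {θ : ℝ} (hn : 0 < n)
    (hN : (n : ℝ) ^ a ≤ 2 * (a.factorial * N))
    (hℓ : (ℓ : ℝ) ≤ θ / (4 * (t + 1) * a.factorial) * (n : ℝ) ^ (a + 1))
    (htn : 2 * (t + 1) ≤ θ * n) :
    (ℓ / N + 1) * (t + 1) ≤ ⌊θ * n⌋₊ := by
  have hna : (0 : ℝ) < (n : ℝ) ^ a := by positivity
  have hN0 : (0 : ℝ) < N :=
    Nat.cast_pos.mpr (pos_of_pow_le_mul hn (hN.trans_eq (mul_assoc _ _ _).symm))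
  have hℓN : (ℓ : ℝ) * (2 * (t + 1)) ≤ θ * n * N := by
    have hfac : (0 : ℝ) < a.factorial := by exact_mod_cast a.factorial_pos
    refine le_of_mul_le_mul_right ?_ (by positivity : (0 : ℝ) < 2 * a.factorial)
    calc (ℓ : ℝ) * (2 * (t + 1)) * (2 * a.factorial) = ℓ * (4 * (t + 1) * a.factorial) := by ring
      _ ≤ θ / (4 * (t + 1) * a.factorial) * (n : ℝ) ^ (a + 1) * (4 * (t + 1) * a.factorial) := by
        gcongr
      _ = θ * n * (n : ℝ) ^ a := by field_simp; ring
      _ ≤ θ * n * (2 * (a.factorial * N)) := mul_le_mul_of_nonneg_left hN (by linarith)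
      _ = θ * n * N * (2 * a.factorial) := by ring
  have hq : ((ℓ / N : ℕ) : ℝ) * (2 * (t + 1)) ≤ θ * n := by
    refine (mul_le_mul_of_nonneg_right Nat.cast_div_le (by positivity)).trans ?_
    rw [div_mul_eq_mul_div, div_le_iff₀ hN0]
    exact hℓN
  apply Nat.le_floor
  push_cast
  linarith

theorem rho_upper_construction_general (k t : ℕ) (h : 2 * t + 1 ≤ k) :
    ∀ ε : ℝ, 0 < ε → ∃ C δ : ℝ, 0 < C ∧ 0 < δ ∧ ∃ n₀ : ℕ, ∀ n > n₀, ∀ ℓ : ℕ,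
      C * (n : ℝ) ^ (k - t - 1) ≤ (ℓ : ℝ) → (ℓ : ℝ) ≤ δ * (n : ℝ) ^ (k - t) →
      (rhoMin n k t ℓ : ℝ) ≤
        (1 + ε) * ((ℓ : ℝ) ^ 2 / (n : ℝ) ^ t) * ((t.factorial : ℝ) / 2)
          * (((k - t - 1).choose t : ℝ)) ^ 2 := by
  intro ε hε
  set a := k - t - 1
  obtain ⟨hka, hk1, hta⟩ : k = t + 1 + a ∧ k - t = a + 1 ∧ t ≤ a := by omega
  -- `θ` is small enough that `C(n - θ n, a)` is within a factor `1 + ε/2` of `n^a / a!`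
  set θ : ℝ := min 1 (ε / 2) / (4 * (a + 1))
  have hθ : 0 < θ := by positivity
  have h4θ : 4 * (a + 1) * θ = min 1 (ε / 2) := mul_div_cancel₀ _ (by positivity)
  have hθ1 : θ ≤ 1 := by nlinarith [min_le_left 1 (ε / 2), (Nat.cast_nonneg a : (0 : ℝ) ≤ a)]
  refine ⟨2 / (ε * a.factorial), θ / (4 * (t + 1) * a.factorial), by positivity, by positivity,
    ⌈(a + 2 * (t + 1)) / θ⌉₊, fun n hn ℓ hℓC hℓδ => ?_⟩
  have hθn : a + 2 * (t + 1) ≤ θ * n := by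
    rw [← div_le_iff₀' hθ]; exact (Nat.le_ceil _).trans (by exact_mod_cast hn.le)
  have hn0 : 0 < n := by omega
  have hN := pow_le_factorial_mul_choose_sub_floor hθ.le (h4θ ▸ min_le_left _ _)
    (n := n) (by linarith)
  rw [hka]
  rw [hk1] at hℓδ
  rw [div_mul_eq_mul_div, div_le_iff₀ (by positivity)] at hℓC
  refine rhoMin_le_of_reserve hta hn0 (Nat.floor_le_of_le (mul_le_of_le_one_left n.cast_nonneg hθ1))
    (hN.trans ?_) (by linarith) (div_add_one_mul_le_floor hn0 (hN.trans ?_) hℓδ (by linarith))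
  all_goals gcongr
  all_goals linarith [min_le_left 1 (ε / 2), min_le_right 1 (ε / 2)]

/-- Explicit-construction upper bound with constant `C(k-t-1,t)²` (Claim 3). -/
theorem rho_upper_construction (k t : ℕ) (ht : 0 < t) (h : 2 * t + 1 ≤ k) :
    ∀ ε : ℝ, 0 < ε → ∃ C δ : ℝ, 0 < C ∧ 0 < δ ∧ ∃ n₀ : ℕ, ∀ n > n₀, ∀ ℓ : ℕ,
      C * (n : ℝ) ^ (k - t - 1) ≤ (ℓ : ℝ) → (ℓ : ℝ) ≤ δ * (n : ℝ) ^ (k - t) →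
      (rhoMin n k t ℓ : ℝ) ≤
        (1 + ε) * ((ℓ : ℝ) ^ 2 / (n : ℝ) ^ t) * ((t.factorial : ℝ) / 2)
          * (((k - t - 1).choose t : ℝ)) ^ 2 :=
  rho_upper_construction_general k t h
end

section
/- Let k, t, n be positive integers with t ≤ k-2 and k ≤ n. Let F be a k-partite family of k-element subsets of [n] (with respect to some partition [n] = X₁ ⊔ … ⊔ X_k). If |F| > C(n, k-t-2), then every (k-t-2)-element subset of [k] is contained in some member of Int(F); in particular, the rank of Int(F) is at least k-t-1. -/
/-- `X : Fin k → Finset ℕ` is a partition of `[n] = {1,…,n}` into `k` parts. -/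
def IsPartition (n k : ℕ) (X : Fin k → Finset ℕ) : Prop :=
  (∀ i j, i ≠ j → Disjoint (X i) (X j)) ∧ Finset.univ.biUnion X = Finset.Icc 1 n

/-- The projection `π(Y) = {i ∈ [k] : Y ∩ Xᵢ ≠ ∅}`. -/
def piProj {k : ℕ} (X : Fin k → Finset ℕ) (Y : Finset ℕ) : Finset (Fin k) :=
  Finset.univ.filter (fun i => (Y ∩ X i).Nonempty)

/-- The intersection structure `Int(F) = {π(E ∩ F) : E, F ∈ F, E ≠ F}`. -/
def IntStr {k : ℕ} (X : Fin k → Finset ℕ) (F : Finset (Finset ℕ)) :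
    Finset (Finset (Fin k)) :=
  F.offDiag.image (fun p => piProj X (p.1 ∩ p.2))

/-- `F_J = F ∩ ⋃_{i ∈ J} Xᵢ`. -/
def restrJ {k : ℕ} (X : Fin k → Finset ℕ) (F : Finset ℕ) (J : Finset (Fin k)) :
    Finset ℕ :=
  F ∩ J.biUnion X

/-- The rank of `M ⊆ 2^[k]`: the size of the smallest subset of `[k]` not contained
in any member of `M ∖ {[k]}`. -/
noncomputable def rankStr {k : ℕ} (M : Finset (Finset (Fin k))) : ℕ :=
  sInf { m : ℕ | ∃ S : Finset (Fin k), S.card = m ∧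
    ∀ I ∈ M, I ≠ Finset.univ → ¬ S ⊆ I }

lemma restr_card {n k : ℕ} {X : Fin k → Finset ℕ} (hX : IsPartition n k X)
    {A : Finset ℕ} (hA : ∀ i, (A ∩ X i).card = 1) (J : Finset (Fin k)) :
    (restrJ X A J).card = J.card := by
  have h : restrJ X A J = J.biUnion fun i => A ∩ X i := by
    simp [restrJ, Finset.inter_biUnion]
  rw [h, Finset.card_biUnion]
  · simp [hA]
  · intro i _ j _ hij
    exact (hX.1 i j hij).mono Finset.inter_subset_right Finset.inter_subset_right

lemma eq_of_inter_eq {n k : ℕ} {X : Fin k → Finset ℕ} (hX : IsPartition n k X)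
    {E F : Finset ℕ} (hE : E ⊆ Finset.Icc 1 n) (hF : F ⊆ Finset.Icc 1 n)
    (h : ∀ i, E ∩ X i = F ∩ X i) : E = F := by
  ext x
  constructor <;> intro hx
  · have hx' : x ∈ Finset.univ.biUnion X := by rw [hX.2]; exact hE hx
    obtain ⟨i, _, hi⟩ := Finset.mem_biUnion.mp hx'
    have : x ∈ F ∩ X i := (h i) ▸ Finset.mem_inter.mpr ⟨hx, hi⟩
    exact (Finset.mem_inter.mp this).1
  · have hx' : x ∈ Finset.univ.biUnion X := by rw [hX.2]; exact hF hx
    obtain ⟨i, _, hi⟩ := Finset.mem_biUnion.mp hx'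
    have : x ∈ E ∩ X i := (h i).symm ▸ Finset.mem_inter.mpr ⟨hx, hi⟩
    exact (Finset.mem_inter.mp this).1

/-- Claim 11: a `k`-partite family of size exceeding `C(n, k-t-2)` has intersection
structure covering every `(k-t-2)`-subset of `[k]`; in particular its rank is
at least `k-t-1`. -/
theorem int_structure_rank (k t n : ℕ) (hk : 0 < k) (ht : 0 < t) (hn : 0 < n)
    (htk : t ≤ k - 2) (hkn : k ≤ n)
    (F : Finset (Finset ℕ)) (X : Fin k → Finset ℕ)
    (hX : IsPartition n k X)
    (hF : ∀ A ∈ F, A ⊆ Finset.Icc 1 n ∧ A.card = k)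
    (hpart : ∀ A ∈ F, ∀ i, (A ∩ X i).card = 1)
    (hcard : n.choose (k - t - 2) < F.card) :
    (∀ J : Finset (Fin k), J.card = k - t - 2 → ∃ I ∈ IntStr X F, J ⊆ I) ∧
    k - t - 1 ≤ rankStr (IntStr X F) := by
  -- No member of IntStr is univ
  have hne_univ : ∀ I ∈ IntStr X F, I ≠ Finset.univ := by
    intro I hI
    obtain ⟨⟨E, G⟩, hEG, hI⟩ := Finset.mem_image.mp hI
    obtain ⟨hE, hG, hEGne⟩ := Finset.mem_offDiag.mp hEG
    intro huniv
    apply hEGne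
    apply eq_of_inter_eq hX (hF E hE).1 (hF G hG).1
    intro i
    have hi : i ∈ piProj X (E ∩ G) := by rw [hI, huniv]; exact Finset.mem_univ i
    obtain ⟨x, hx⟩ := (Finset.mem_filter.mp hi).2
    simp only [Finset.mem_inter] at hx
    obtain ⟨a, ha⟩ := Finset.card_eq_one.mp (hpart E hE i)
    obtain ⟨b, hb⟩ := Finset.card_eq_one.mp (hpart G hG i)
    have hxa : x ∈ E ∩ X i := Finset.mem_inter.mpr ⟨hx.1.1, hx.2⟩
    have hxb : x ∈ G ∩ X i := Finset.mem_inter.mpr ⟨hx.1.2, hx.2⟩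
    rw [ha] at hxa; rw [hb] at hxb
    rw [ha, hb]
    exact congrArg _ ((Finset.mem_singleton.mp hxa).symm.trans (Finset.mem_singleton.mp hxb))
  have hmain : ∀ J : Finset (Fin k), J.card = k - t - 2 → ∃ I ∈ IntStr X F, J ⊆ I := by
    intro J hJ
    -- pigeonhole
    have hmaps : ∀ A ∈ F, restrJ X A J ∈
        (Finset.Icc 1 n).powersetCard (k - t - 2) := by
      intro A hA
      rw [Finset.mem_powersetCard]
      refine ⟨Finset.inter_subset_left.trans (hF A hA).1, ?_⟩
      rw [restr_card hX (hpart A hA) J, hJ]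
    have hcard' : ((Finset.Icc 1 n).powersetCard (k - t - 2)).card < F.card := by
      rwa [Finset.card_powersetCard, Nat.card_Icc, Nat.add_sub_cancel]
    obtain ⟨E, hE, G, hG, hEGne, heq⟩ :=
      Finset.exists_ne_map_eq_of_card_lt_of_maps_to hcard' hmaps
    -- for i ∈ J, E ∩ X i = G ∩ X i
    have hinter : ∀ i ∈ J, E ∩ X i = G ∩ X i := by
      intro i hi
      have hsub : X i ⊆ J.biUnion X := Finset.subset_biUnion_of_mem X hi
      have h1 : E ∩ X i = restrJ X E J ∩ X i := by
        unfold restrJ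
        rw [Finset.inter_assoc, Finset.inter_eq_right.mpr hsub]
      have h2 : G ∩ X i = restrJ X G J ∩ X i := by
        unfold restrJ
        rw [Finset.inter_assoc, Finset.inter_eq_right.mpr hsub]
      rw [h1, h2, heq]
    refine ⟨piProj X (E ∩ G), ?_, ?_⟩
    · exact Finset.mem_image.mpr ⟨(E, G), Finset.mem_offDiag.mpr ⟨hE, hG, hEGne⟩, rfl⟩
    · intro i hi
      rw [piProj, Finset.mem_filter]
      refine ⟨Finset.mem_univ i, ?_⟩
      obtain ⟨a, ha⟩ := Finset.card_eq_one.mp (hpart E hE i)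
      have haE : a ∈ E ∩ X i := ha ▸ Finset.mem_singleton_self a
      have haG : a ∈ G ∩ X i := (hinter i hi) ▸ haE
      exact ⟨a, Finset.mem_inter.mpr ⟨Finset.mem_inter.mpr
        ⟨(Finset.mem_inter.mp haE).1, (Finset.mem_inter.mp haG).1⟩,
        (Finset.mem_inter.mp haE).2⟩⟩
  refine ⟨hmain, ?_⟩
  unfold rankStr
  apply le_csInf
  · refine ⟨k, Finset.univ, ?_, ?_⟩
    · simp
    · intro I hI hIne hsub
      exact hIne (Finset.univ_subset_iff.mp hsub)
  · rintro m ⟨S, hS, hprop⟩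
    by_contra hlt
    push_neg at hlt
    have hm : m ≤ k - t - 2 := by omega
    have hle : k - t - 2 ≤ Fintype.card (Fin k) := by
      simp only [Fintype.card_fin]; omega
    obtain ⟨J, hSJ, hJcard⟩ := Finset.exists_superset_card_eq (hS ▸ hm) hle
    obtain ⟨I, hI, hJI⟩ := hmain J hJcard
    exact hprop I hI (hne_univ I hI) (hSJ.trans hJI)
end

section
/- Let k, t, n be positive integers with t < k ≤ n. Let G be a k-partite family of k-element subsets of [n] (with respect to a partition [n] = X₁ ⊔ … ⊔ X_k) such that: (i) G is not t-avoiding, i.e., there exist distinct E, F ∈ G with |E ∩ F| = t; and (ii) for every J ∈ Int(G) and every F ∈ G, the family G(F_J) is 2k-diverse. Then ρ(G) ≥ (k+t)·|G|² / (4k·|∂^{(t)}(G)|). -/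
/-- `H(Y) = {H \ Y : H ∈ H, Y ⊆ H}`. -/
def fam (H : Finset (Finset ℕ)) (Y : Finset ℕ) : Finset (Finset ℕ) :=
  (H.filter (fun A => Y ⊆ A)).image (fun A => A \ Y)

/-- A family `H` is `s`-diverse if every element lies in at most `|H|/s` members of `H`. -/
def Diverse (s : ℝ) (H : Finset (Finset ℕ)) : Prop :=
  ∀ v : ℕ, ((H.filter (fun A => v ∈ A)).card : ℝ) ≤ (H.card : ℝ) / s

/-- The `i`-shadow `∂⁽ⁱ⁾(F) = {D : |D| = i, D ⊆ F for some F ∈ F}`. -/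
def shadow (i : ℕ) (F : Finset (Finset ℕ)) : Finset (Finset ℕ) :=
  F.biUnion (fun A => A.powersetCard i)

/-!
Fix distinct `E, F ∈ G` with `|E ∩ F| = t` and let `J = π(E ∩ F)`, a set of `t` parts. The map
`A ↦ A_J` sends `G` into `∂⁽ᵗ⁾(G)`, and its nonempty fibre over `D` is the star
`{A ∈ G : D ⊆ A}`, of size `m_D` say. Diversity of `G(D)` puts each `v ∉ D` in at most `m_D / 2k`
members of the star, so a member `A` meets all but at most `(k - t)(m_D / 2k - 1)` other members
exactly in `D` (a bad partner shares some `v ∈ A ∖ D` with `A`). This yields at least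
`(k + t) m_D² / 2k` ordered pairs meeting in `D`. Summing over `D ∈ ∂⁽ᵗ⁾(G)` and applying
Cauchy–Schwarz to `∑ m_D = |G|` gives the bound.
-/

open Finset Function

section Star

variable {α : Type*} [DecidableEq α]

lemma card_filter_offDiag (s : Finset α) (P : α → α → Prop) [DecidableRel P] :
    #{p ∈ s.offDiag | P p.1 p.2} = ∑ a ∈ s, #{b ∈ s | a ≠ b ∧ P a b} := by
  have hoff : s.offDiag = {p ∈ s ×ˢ s | p.1 ≠ p.2} := by ext; simp [and_assoc]
  rw [hoff, filter_filter, card_filter, sum_product]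
  simp only [card_filter]

lemma sub_le_card_filter_inter_eq {H : Finset (Finset α)} {D A : Finset α} {d : ℝ}
    (hD : ∀ B ∈ H, D ⊆ B) (hA : A ∈ H) (hdeg : ∀ v ∉ D, (#{B ∈ H | v ∈ B} : ℝ) ≤ d) :
    (#H : ℝ) - 1 - #(A \ D) * (d - 1) ≤ #{B ∈ H | A ≠ B ∧ A ∩ B = D} := by
  have hsplit : #{B ∈ H | A ≠ B ∧ A ∩ B = D} + #{B ∈ H | A ≠ B ∧ A ∩ B ≠ D} + 1 = #H := by
    rw [← card_erase_add_one hA, ← filter_ne H A,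
      ← card_filter_add_card_filter_not (s := {B ∈ H | A ≠ B}) (fun B => A ∩ B = D),
      filter_filter, filter_filter]
  have hbad : {B ∈ H | A ≠ B ∧ A ∩ B ≠ D} ⊆ (A \ D).biUnion fun v => {B ∈ H | v ∈ B}.erase A := by
    intro B hB
    obtain ⟨hBH, hAB, hne⟩ := by simpa only [mem_filter] using hB
    obtain ⟨v, hv, hvD⟩ := exists_of_ssubset
      (ssubset_of_subset_of_ne (subset_inter (hD A hA) (hD B hBH)) (Ne.symm hne))
    simp only [mem_biUnion, mem_sdiff, mem_erase, mem_filter]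
    exact ⟨v, ⟨(mem_inter.mp hv).1, hvD⟩, Ne.symm hAB, hBH, (mem_inter.mp hv).2⟩
  have hbad_card : (#{B ∈ H | A ≠ B ∧ A ∩ B ≠ D} : ℝ) ≤ #(A \ D) * (d - 1) := by
    calc (#{B ∈ H | A ≠ B ∧ A ∩ B ≠ D} : ℝ)
        ≤ ∑ v ∈ A \ D, (#({B ∈ H | v ∈ B}.erase A) : ℝ) := by
          exact_mod_cast (card_le_card hbad).trans card_biUnion_le
      _ ≤ ∑ v ∈ A \ D, (d - 1) := sum_le_sum fun v hv => by
          obtain ⟨hvA, hvD⟩ := mem_sdiff.mp hv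
          rw [cast_card_erase_of_mem (mem_filter.mpr ⟨hA, hvA⟩)]
          linarith [hdeg v hvD]
      _ = #(A \ D) * (d - 1) := by rw [sum_const, nsmul_eq_mul]
  have hsplitℝ : (#{B ∈ H | A ≠ B ∧ A ∩ B = D} : ℝ) + #{B ∈ H | A ≠ B ∧ A ∩ B ≠ D} + 1 = #H := by
    exact_mod_cast hsplit
  linarith

lemma mul_le_card_filter_offDiag_inter_eq {H : Finset (Finset α)} {D : Finset α} {r : ℕ} {d : ℝ}
    (hD : ∀ B ∈ H, D ⊆ B) (hr : ∀ A ∈ H, #(A \ D) = r)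
    (hdeg : ∀ v ∉ D, (#{B ∈ H | v ∈ B} : ℝ) ≤ d) :
    (#H : ℝ) * (#H - 1 - r * (d - 1)) ≤ #{p ∈ H.offDiag | p.1 ∩ p.2 = D} := by
  rw [card_filter_offDiag H (fun A B => A ∩ B = D), Nat.cast_sum, ← nsmul_eq_mul, ← sum_const]
  exact sum_le_sum fun A hA => hr A hA ▸ sub_le_card_filter_inter_eq hD hA hdeg

end Star

section Diverse

variable {G : Finset (Finset ℕ)} {Y : Finset ℕ}

lemma injOn_sdiff_filter_subset :
    Set.InjOn (· \ Y) (({A ∈ G | Y ⊆ A} : Finset (Finset ℕ)) : Set (Finset ℕ)) :=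
  (superset_injOn_sdiff Y).mono fun _ hA => (mem_filter.mp hA).2

lemma card_fam : #(fam G Y) = #{A ∈ G | Y ⊆ A} :=
  card_image_of_injOn injOn_sdiff_filter_subset

lemma card_filter_mem_fam {v : ℕ} (hv : v ∉ Y) :
    #{C ∈ fam G Y | v ∈ C} = #{A ∈ {A ∈ G | Y ⊆ A} | v ∈ A} := by
  rw [fam, filter_image, card_image_of_injOn (injOn_sdiff_filter_subset.mono (filter_subset _ _))]
  simp only [mem_sdiff, hv, not_false_eq_true, and_true]

lemma Diverse.card_filter_mem_le {s : ℝ} (h : Diverse s (fam G Y)) {v : ℕ} (hv : v ∉ Y) :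
    (#{A ∈ {A ∈ G | Y ⊆ A} | v ∈ A} : ℝ) ≤ #{A ∈ G | Y ⊆ A} / s := by
  simpa only [card_filter_mem_fam hv, card_fam] using h v

lemma one_sub_div_mul_sq_le_card_filter_offDiag {s : ℝ} {r : ℕ} (hr : 1 ≤ r)
    (hGr : ∀ A ∈ G, Y ⊆ A → #(A \ Y) = r) (hdiv : Diverse s (fam G Y)) :
    (1 - r / s) * (#{A ∈ G | Y ⊆ A} : ℝ) ^ 2 ≤ #{p ∈ G.offDiag | p.1 ∩ p.2 = Y} := by
  set H := {A ∈ G | Y ⊆ A}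
  have hH := mul_le_card_filter_offDiag_inter_eq (H := H) (D := Y)
    (fun B hB => (mem_filter.mp hB).2) (fun A hA => hGr A (mem_filter.mp hA).1 (mem_filter.mp hA).2)
    (fun v hv => hdiv.card_filter_mem_le hv)
  have hsub : {p ∈ H.offDiag | p.1 ∩ p.2 = Y} ⊆ {p ∈ G.offDiag | p.1 ∩ p.2 = Y} :=
    filter_subset_filter _ (offDiag_mono (filter_subset _ _))
  have hr' : (1 : ℝ) ≤ r := by exact_mod_cast hr
  calc (1 - r / s) * (#H : ℝ) ^ 2
        ≤ (1 - r / s) * (#H : ℝ) ^ 2 + (r - 1) * #H := by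
          have := mul_nonneg (sub_nonneg.mpr hr') (Nat.cast_nonneg (α := ℝ) #H)
          linarith
    _ = #H * (#H - 1 - r * (#H / s - 1)) := by ring
    _ ≤ _ := hH.trans (by exact_mod_cast card_le_card hsub)

end Diverse

section Pairs

variable (t : ℕ) (F : Finset (Finset ℕ))

lemma card_filter_offDiag_card_inter_le_two_mul_rhoPairs :
    #{p ∈ F.offDiag | #(p.1 ∩ p.2) = t} ≤ 2 * rhoPairs t F := by
  have hsub : {p ∈ F.offDiag | #(p.1 ∩ p.2) = t} ⊆
      ((F.powersetCard 2).filter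
        fun P => ∃ A ∈ P, ∃ B ∈ P, A ≠ B ∧ #(A ∩ B) = t).biUnion offDiag := by
    intro p hp
    obtain ⟨⟨h1, h2, hne⟩, hcard⟩ := by simpa only [mem_filter, mem_offDiag] using hp
    refine mem_biUnion.mpr ⟨{p.1, p.2}, ?_, by simp [hne]⟩
    refine mem_filter.mpr ⟨mem_powersetCard.mpr ⟨?_, card_pair hne⟩, p.1, ?_, p.2, ?_, hne, hcard⟩
    · simp [insert_subset_iff, h1, h2]
    · simp
    · simp
  refine (card_le_card hsub).trans (card_biUnion_le.trans_eq ?_)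
  rw [rhoPairs, mul_comm, ← smul_eq_mul, ← sum_const]
  exact sum_congr rfl fun P hP => by rw [offDiag_card, (mem_powersetCard.mp (mem_filter.mp hP).1).2]

lemma card_of_mem_shadow {D : Finset ℕ} (hD : D ∈ shadow t F) : #D = t := by
  obtain ⟨A, -, hDA⟩ := mem_biUnion.mp hD
  exact (mem_powersetCard.mp hDA).2

lemma sum_card_filter_offDiag_inter_eq_le :
    ∑ D ∈ shadow t F, #{p ∈ F.offDiag | p.1 ∩ p.2 = D} ≤ #{p ∈ F.offDiag | #(p.1 ∩ p.2) = t} := by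
  have hmaps : Set.MapsTo (fun p : Finset ℕ × Finset ℕ => p.1 ∩ p.2)
      ({p ∈ F.offDiag | #(p.1 ∩ p.2) = t} : Finset _) (shadow t F) := by
    intro p hp
    obtain ⟨hp, hcard⟩ := mem_filter.mp hp
    exact mem_biUnion.mpr ⟨p.1, (mem_offDiag.mp hp).1,
      mem_powersetCard.mpr ⟨inter_subset_left, hcard⟩⟩
  rw [card_eq_sum_card_fiberwise hmaps]
  refine sum_le_sum fun D hD => card_le_card fun p hp => ?_
  obtain ⟨hpF, hpD⟩ := mem_filter.mp hp
  exact mem_filter.mpr ⟨mem_filter.mpr ⟨hpF, hpD ▸ card_of_mem_shadow t F hD⟩, hpD⟩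

end Pairs

section Partite

variable {k : ℕ} {X : Fin k → Finset ℕ} {G : Finset (Finset ℕ)}

lemma card_inter_biUnion (hX : Pairwise (Disjoint on X)) (A : Finset ℕ) (J : Finset (Fin k)) :
    #(A ∩ J.biUnion X) = ∑ i ∈ J, #(A ∩ X i) := by
  rw [inter_biUnion, card_biUnion]
  exact fun i _ j _ hij => (hX hij).mono inter_subset_right inter_subset_right

lemma card_restrJ (hX : Pairwise (Disjoint on X)) {A : Finset ℕ} (hA : ∀ i, #(A ∩ X i) = 1)
    (J : Finset (Fin k)) : #(restrJ X A J) = #J := by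
  simp [restrJ, card_inter_biUnion hX, hA]

lemma card_piProj (hX : Pairwise (Disjoint on X)) {Y : Finset ℕ} (hY : Y ⊆ univ.biUnion X)
    (hYX : ∀ i, #(Y ∩ X i) ≤ 1) : #(piProj X Y) = #Y := by
  conv_rhs => rw [← inter_eq_left.mpr hY, card_inter_biUnion hX]
  rw [piProj, card_filter]
  refine sum_congr rfl fun i _ => ?_
  split_ifs with h
  · exact (le_antisymm (hYX i) h.card_pos).symm
  · rw [not_nonempty_iff_eq_empty.mp h, card_empty]

lemma filter_restrJ_eq_filter_subset (hX : Pairwise (Disjoint on X))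
    (hpart : ∀ A ∈ G, ∀ i, #(A ∩ X i) = 1) {J : Finset (Fin k)} {A₀ : Finset ℕ} (hA₀ : A₀ ∈ G) :
    {A ∈ G | restrJ X A J = restrJ X A₀ J} = {A ∈ G | restrJ X A₀ J ⊆ A} := by
  refine filter_congr fun A hA => ⟨fun h => h ▸ inter_subset_left, fun h => ?_⟩
  refine (eq_of_subset_of_card_le (subset_inter h inter_subset_right) ?_).symm
  change #(restrJ X A J) ≤ _
  rw [card_restrJ hX (hpart A hA), card_restrJ hX (hpart A₀ hA₀)]

lemma div_mul_sq_card_filter_restrJ_le {t : ℕ} (htk : t < k) (hX : Pairwise (Disjoint on X))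
    (hGk : ∀ A ∈ G, #A = k) (hpart : ∀ A ∈ G, ∀ i, #(A ∩ X i) = 1) {J : Finset (Fin k)}
    (hJ : #J = t)
    (hdiv : ∀ A ∈ G, Diverse (2 * k) (fam G (restrJ X A J))) (D : Finset ℕ) :
    ((k + t) / (2 * k)) * (#{A ∈ G | restrJ X A J = D} : ℝ) ^ 2
      ≤ #{p ∈ G.offDiag | p.1 ∩ p.2 = D} := by
  by_cases hD : ∃ A₀ ∈ G, restrJ X A₀ J = D
  · obtain ⟨A₀, hA₀, rfl⟩ := hD
    have hk : (k : ℝ) ≠ 0 := by exact_mod_cast (Nat.zero_lt_of_lt htk).ne'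
    have hcoef : ((k : ℝ) + t) / (2 * k) = 1 - ((k - t : ℕ) : ℝ) / (2 * k) := by
      rw [Nat.cast_sub htk.le]
      field_simp
      ring
    rw [filter_restrJ_eq_filter_subset hX hpart hA₀, hcoef]
    refine one_sub_div_mul_sq_le_card_filter_offDiag (Nat.le_sub_of_add_le' htk)
      (fun A hA hsub => ?_) (hdiv A₀ hA₀)
    rw [card_sdiff_of_subset hsub, hGk A hA, card_restrJ hX (hpart A₀ hA₀), hJ]
  · simp only [not_exists, not_and] at hD
    rw [filter_false_of_mem hD, card_empty]
    simp

end Partite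

theorem rho_not_avoiding_lower_general (k t n : ℕ) (htk : t < k)
    (G : Finset (Finset ℕ)) (X : Fin k → Finset ℕ)
    (hX : IsPartition n k X)
    (hG : ∀ A ∈ G, A ⊆ Finset.Icc 1 n ∧ A.card = k)
    (hpart : ∀ A ∈ G, ∀ i, (A ∩ X i).card = 1)
    (hnotavoid : ∃ E ∈ G, ∃ F ∈ G, E ≠ F ∧ (E ∩ F).card = t)
    (hdiv : ∀ J ∈ IntStr X G, ∀ A ∈ G, Diverse (2 * (k : ℝ)) (fam G (restrJ X A J))) :
    ((k : ℝ) + (t : ℝ)) * (G.card : ℝ) ^ 2 / (4 * (k : ℝ) * ((shadow t G).card : ℝ))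
      ≤ (rhoPairs t G : ℝ) := by
  have hXdisj : Pairwise (Disjoint on X) := fun i j hij => hX.1 i j hij
  obtain ⟨E, hE, F, hF, hEF, hEFt⟩ := hnotavoid
  set J := piProj X (E ∩ F)
  have hJ : J ∈ IntStr X G := mem_image.mpr ⟨(E, F), mem_offDiag.mpr ⟨hE, hF, hEF⟩, rfl⟩
  have hJt : #J = t := hEFt ▸ card_piProj hXdisj (hX.2 ▸ inter_subset_left.trans (hG E hE).1)
    fun i => (card_le_card (inter_subset_inter_right inter_subset_left)).trans (hpart E hE i).le
  set m : Finset ℕ → ℝ := fun D => #{A ∈ G | restrJ X A J = D}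
  have hsum : ∑ D ∈ shadow t G, m D = #G := by
    rw [card_eq_sum_card_fiberwise (f := (restrJ X · J)) fun A hA => mem_biUnion.mpr
      ⟨A, hA, mem_powersetCard.mpr ⟨inter_subset_left, hJt ▸ card_restrJ hXdisj (hpart A hA) J⟩⟩]
    push_cast; rfl
  have hpairs := (sum_card_filter_offDiag_inter_eq_le t G).trans
    (card_filter_offDiag_card_inter_le_two_mul_rhoPairs t G)
  calc ((k : ℝ) + t) * #G ^ 2 / (4 * k * #(shadow t G))
      = (k + t) / (4 * k) * ((∑ D ∈ shadow t G, m D) ^ 2 / #(shadow t G)) := by rw [hsum]; ring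
    _ ≤ (k + t) / (4 * k) * ∑ D ∈ shadow t G, m D ^ 2 := by
      gcongr
      refine div_le_of_le_mul₀ (by positivity) (by positivity) ?_
      rw [mul_comm]
      exact sq_sum_le_card_mul_sum_sq
    _ = 1 / 2 * ∑ D ∈ shadow t G, (k + t) / (2 * k) * m D ^ 2 := by
      rw [mul_sum, mul_sum]; congr 1; ext D; ring
    _ ≤ 1 / 2 * ∑ D ∈ shadow t G, (#{p ∈ G.offDiag | p.1 ∩ p.2 = D} : ℝ) := by
      gcongr with D
      exact div_mul_sq_card_filter_restrJ_le htk hXdisj (fun A hA => (hG A hA).2) hpart hJt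
        (hdiv J hJ) D
    _ ≤ rhoPairs t G := by
      have hpairsℝ := (Nat.cast_le (α := ℝ)).mpr hpairs
      push_cast at hpairsℝ
      linarith

/-- Claim 12: a regularized `k`-partite family that is not `t`-avoiding induces
at least `(k+t)|G|²/(4k|∂⁽ᵗ⁾(G)|)` pairs with intersection of size `t`. -/
theorem rho_not_avoiding_lower (k t n : ℕ) (hk : 0 < k) (ht : 0 < t)
    (htk : t < k) (hkn : k ≤ n)
    (G : Finset (Finset ℕ)) (X : Fin k → Finset ℕ)
    (hX : IsPartition n k X)
    (hG : ∀ A ∈ G, A ⊆ Finset.Icc 1 n ∧ A.card = k)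
    (hpart : ∀ A ∈ G, ∀ i, (A ∩ X i).card = 1)
    (hnotavoid : ∃ E ∈ G, ∃ F ∈ G, E ≠ F ∧ (E ∩ F).card = t)
    (hdiv : ∀ J ∈ IntStr X G, ∀ A ∈ G, Diverse (2 * (k : ℝ)) (fam G (restrJ X A J))) :
    ((k : ℝ) + (t : ℝ)) * (G.card : ℝ) ^ 2 / (4 * (k : ℝ) * ((shadow t G).card : ℝ))
      ≤ (rhoPairs t G : ℝ) :=
  rho_not_avoiding_lower_general k t n htk G X hX hG hpart hnotavoid hdiv
end

section
/- Let n, k, t, r be integers with 1 ≤ t, k ≥ 2t+1, n ≥ 2k+2 and 1 ≤ r ≤ C(n-2t-2, k-t-1). Define A₁ = {F ⊆ [n] : |F| = k, [t+1] ⊆ F} and A₂ = {F ⊆ [n] : |F| = k, {t+2,…,2t+2} ⊆ F, F ∩ [t+1] = ∅}. Then for every B ⊆ A₂ with |B| = r, the family F = A₁ ∪ B has size C(n-t-1, k-t-1) + r and satisfies ρ(F) = r·C(k,t)·C(n-k-t-1, k-2t-1). In particular, ρ_{n,k,t}(C(n-t-1,k-t-1)+r) ≤ r·C(k,t)·C(n-k-t-1,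 k-2t-1). -/
/-- The star `A₁ = {F ∈ C([n],k) : [t+1] ⊆ F}`. -/
def famA1 (n k t : ℕ) : Finset (Finset ℕ) :=
  ((Finset.Icc 1 n).powersetCard k).filter (fun F => Finset.Icc 1 (t + 1) ⊆ F)

/-- The star `A₂ = {F ∈ C([n],k) : [t+2,2t+2] ⊆ F, F ∩ [t+1] = ∅}`. -/
def famA2 (n k t : ℕ) : Finset (Finset ℕ) :=
  ((Finset.Icc 1 n).powersetCard k).filter
    (fun F => Finset.Icc (t + 2) (2 * t + 2) ⊆ F ∧ Disjoint F (Finset.Icc 1 (t + 1)))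

/-!
Every member of `A₁` contains `[t+1]` and every member of `A₂` contains `[t+2, 2t+2]`, so two
sets from the same star share at least `t+1` elements: only pairs `a ∈ A₁`, `b ∈ B` are counted.
For a fixed `b ∈ A₂`, the sets `a ∈ A₁` with `|a ∩ b| = t` are `[t+1] ∪ T ∪ S` with `T` a
`t`-subset of `b` and `S` a `(k-2t-1)`-subset of the `n-k-t-1` points outside `[t+1] ∪ b`.
-/

open Finset

section Counting

variable {α : Type*} [DecidableEq α]

theorem card_filter_superset_powersetCard {U C : Finset α} {k : ℕ} (hCU : C ⊆ U)
    (hk : #C ≤ k) (p : Finset α → Prop) [DecidablePred p] :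
    #{F ∈ U.powersetCard k | C ⊆ F ∧ p F} = #{S ∈ (U \ C).powersetCard (k - #C) | p (S ∪ C)} := by
  refine card_nbij' (· \ C) (· ∪ C) ?_ ?_ ?_ ?_
  · simp only [coe_filter, mem_powersetCard, Set.MapsTo, Set.mem_ofPred_eq, and_imp]
    intro F hFU hFk hCF hp
    exact ⟨⟨sdiff_subset_sdiff hFU le_rfl, by rw [card_sdiff_of_subset hCF, hFk]⟩,
      by rwa [sdiff_union_of_subset hCF]⟩
  · simp only [coe_filter, mem_powersetCard, Set.MapsTo, Set.mem_ofPred_eq, and_imp]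
    intro S hSU hSk hp
    have hSC : Disjoint S C := disjoint_of_subset_left hSU sdiff_disjoint
    exact ⟨⟨union_subset (hSU.trans sdiff_subset) hCU,
      by rw [card_union_of_disjoint hSC, hSk, Nat.sub_add_cancel hk]⟩, subset_union_right, hp⟩
  · intro F hF
    exact sdiff_union_of_subset (mem_filter.mp hF).2.1
  · intro S hS
    exact union_sdiff_cancel_right
      (disjoint_of_subset_left (mem_powersetCard.mp (mem_filter.mp hS).1).1 sdiff_disjoint)

theorem card_filter_card_inter_powersetCard {V b : Finset α} {m s : ℕ} (hbV : b ⊆ V)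
    (hs : s ≤ m) :
    #{S ∈ V.powersetCard m | #(S ∩ b) = s} = (#b).choose s * (#V - #b).choose (m - s) := by
  rw [← card_sdiff_of_subset hbV, ← card_powersetCard, ← card_powersetCard, ← card_product]
  refine card_nbij' (fun S => (S ∩ b, S \ b)) (fun P => P.1 ∪ P.2) ?_ ?_ ?_ ?_
  · simp only [coe_filter, mem_powersetCard, Set.MapsTo, Set.mem_ofPred_eq, coe_product,
      Set.mem_prod, mem_coe, and_imp]
    intro S hSV hSm hSb
    refine ⟨⟨inter_subset_right, hSb⟩, sdiff_subset_sdiff hSV le_rfl, ?_⟩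
    have := card_inter_add_card_sdiff S b
    omega
  · simp only [coe_filter, mem_powersetCard, Set.MapsTo, Set.mem_ofPred_eq, coe_product,
      Set.mem_prod, mem_coe, and_imp, Prod.forall]
    intro T R hTb hTs hRV hRm
    have hTR : Disjoint T R :=
      disjoint_of_subset_left hTb (disjoint_of_subset_right hRV disjoint_sdiff)
    have hRb : Disjoint R b := disjoint_of_subset_left hRV sdiff_disjoint
    refine ⟨⟨union_subset (hTb.trans hbV) (hRV.trans sdiff_subset), ?_⟩, ?_⟩
    · rw [card_union_of_disjoint hTR, hTs, hRm]; omega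
    · rw [union_inter_distrib_right, inter_eq_left.mpr hTb, disjoint_iff_inter_eq_empty.mp hRb,
        union_empty, hTs]
  · intro S _
    exact sup_inf_sdiff S b
  · simp only [coe_product, Set.LeftInvOn, Set.mem_prod, mem_coe, mem_powersetCard, and_imp,
      Prod.forall, Prod.mk.injEq]
    intro T R hTb _ hRV _
    have hRb : Disjoint R b := disjoint_of_subset_left hRV sdiff_disjoint
    refine ⟨?_, ?_⟩
    · rw [union_inter_distrib_right, inter_eq_left.mpr hTb, disjoint_iff_inter_eq_empty.mp hRb,
        union_empty]
    · rw [union_sdiff_distrib, sdiff_eq_empty_iff_subset.mpr hTb, empty_union,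
        sdiff_eq_self_of_disjoint hRb]

theorem pairwise_card_inter_ne_of_forall_subset {G : Set (Finset α)} {C : Finset α} {t : ℕ}
    (hC : ∀ F ∈ G, C ⊆ F) (ht : t < #C) : G.Pairwise fun A B => #(A ∩ B) ≠ t := by
  intro A hA B hB _ hAB
  have := card_le_card (subset_inter (hC A hA) (hC B hB))
  omega

end Counting

theorem pair_mem_rhoPairs_filter_iff {x y : Finset ℕ} {t : ℕ} (hxy : x ≠ y) :
    (∃ A ∈ ({x, y} : Finset (Finset ℕ)), ∃ B ∈ ({x, y} : Finset (Finset ℕ)),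
      A ≠ B ∧ #(A ∩ B) = t) ↔ #(x ∩ y) = t := by
  simp [hxy, hxy.symm, inter_comm]

theorem rhoPairs_union_of_pairwise {G H : Finset (Finset ℕ)} {t : ℕ} (hGH : Disjoint G H)
    (hG : (G : Set (Finset ℕ)).Pairwise fun A B => #(A ∩ B) ≠ t)
    (hH : (H : Set (Finset ℕ)).Pairwise fun A B => #(A ∩ B) ≠ t) :
    rhoPairs t (G ∪ H) = ∑ h ∈ H, #{g ∈ G | #(g ∩ h) = t} := by
  rw [← card_sigma]
  refine (card_nbij (fun p => {p.2, p.1}) ?_ ?_ ?_).symm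
  · rintro ⟨h, g⟩ hp
    simp only [coe_sigma, Set.mem_sigma_iff, mem_coe, mem_filter] at hp
    obtain ⟨hH, hG, hgh⟩ := hp
    have hne : g ≠ h := fun e => disjoint_left.mp hGH hG (e ▸ hH)
    simp only [coe_filter, Set.mem_ofPred_eq, mem_powersetCard, pair_mem_rhoPairs_filter_iff hne]
    exact ⟨⟨insert_subset (mem_union_left _ hG) (singleton_subset_iff.mpr (mem_union_right _ hH)),
      card_pair hne⟩, hgh⟩
  · rintro ⟨h, g⟩ hp ⟨h', g'⟩ hp' (e : ({g, h} : Finset (Finset ℕ)) = {g', h'})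
    simp only [coe_sigma, Set.mem_sigma_iff, mem_coe, mem_filter] at hp hp'
    have hGH' : ∀ {a b}, a ∈ G → b ∈ H → a ≠ b := fun ha hb e => disjoint_left.mp hGH ha (e ▸ hb)
    have hg : g ∈ ({g', h'} : Finset (Finset ℕ)) := e ▸ mem_insert_self g {h}
    have hh : h ∈ ({g', h'} : Finset (Finset ℕ)) := e ▸ mem_insert_of_mem (mem_singleton_self h)
    simp only [mem_insert, mem_singleton] at hg hh
    obtain rfl : g = g' := hg.resolve_right (hGH' hp.2.1 hp'.1)
    obtain rfl : h = h' := hh.resolve_left (hGH' hp'.2.1 hp.1).symm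
    rfl
  · intro P hP
    simp only [coe_filter, Set.mem_ofPred_eq, mem_powersetCard, card_eq_two] at hP
    obtain ⟨⟨hPGH, x, y, hxy, rfl⟩, hxyt⟩ := hP
    rw [pair_mem_rhoPairs_filter_iff hxy] at hxyt
    rw [insert_subset_iff, singleton_subset_iff, mem_union, mem_union] at hPGH
    obtain ⟨hx | hx, hy | hy⟩ := hPGH
    · exact absurd hxyt (hG hx hy hxy)
    · exact ⟨⟨y, x⟩, by simpa using ⟨hy, hx, hxyt⟩, rfl⟩
    · exact ⟨⟨x, y⟩, by simpa [inter_comm] using ⟨hx, hy, hxyt⟩, pair_comm _ _⟩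
    · exact absurd hxyt (hH hx hy hxy)

section TwoStars

variable {n k t : ℕ}

theorem mem_famA2 {F : Finset ℕ} :
    F ∈ famA2 n k t ↔ F ⊆ Icc 1 n ∧ #F = k ∧ Icc (t + 2) (2 * t + 2) ⊆ F ∧
      Disjoint F (Icc 1 (t + 1)) := by
  simp [famA2, and_assoc]

theorem disjoint_famA1_famA2 : Disjoint (famA1 n k t) (famA2 n k t) := by
  refine disjoint_left.mpr fun F h1 h2 => ?_
  have h1F : 1 ∈ F := (mem_filter.mp h1).2 (by simp)
  exact disjoint_left.mp (mem_famA2.mp h2).2.2.2 h1F (by simp)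

theorem pairwise_famA1 : (famA1 n k t : Set (Finset ℕ)).Pairwise fun A B => #(A ∩ B) ≠ t :=
  pairwise_card_inter_ne_of_forall_subset (C := Icc 1 (t + 1))
    (fun _ hF => (mem_filter.mp hF).2) (by simp)

theorem pairwise_of_subset_famA2 {B : Finset (Finset ℕ)} (hB : B ⊆ famA2 n k t) :
    (B : Set (Finset ℕ)).Pairwise fun A B => #(A ∩ B) ≠ t :=
  pairwise_card_inter_ne_of_forall_subset (C := Icc (t + 2) (2 * t + 2))
    (fun _ hF => (mem_famA2.mp (hB hF)).2.2.1) (by simp; omega)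

theorem card_famA1 (hn : t + 1 ≤ n) (hk : t + 1 ≤ k) :
    #(famA1 n k t) = (n - t - 1).choose (k - t - 1) := by
  have := card_filter_superset_powersetCard (U := Icc 1 n) (C := Icc 1 (t + 1))
    (Icc_subset_Icc le_rfl hn) (by simpa using hk) (fun _ => True)
  simp only [and_true, filter_true, card_powersetCard] at this
  rw [famA1, this, card_sdiff_of_subset (Icc_subset_Icc le_rfl hn)]
  simp only [Nat.card_Icc]
  congr 1

theorem card_famA2 (hn : 2 * t + 2 ≤ n) (hk : t + 1 ≤ k) :
    #(famA2 n k t) = (n - 2 * t - 2).choose (k - t - 1) := by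
  have hCU : Icc (t + 2) (2 * t + 2) ⊆ Icc 1 n := Icc_subset_Icc (by omega) hn
  have hDV : Icc 1 (t + 1) ⊆ Icc 1 n \ Icc (t + 2) (2 * t + 2) := by
    intro x hx
    simp only [mem_sdiff, mem_Icc] at hx ⊢
    omega
  have hCD : Disjoint (Icc (t + 2) (2 * t + 2)) (Icc 1 (t + 1)) :=
    disjoint_left.mpr fun x hx hx' => by simp only [mem_Icc] at hx hx'; omega
  rw [famA2, card_filter_superset_powersetCard hCU (by simp; omega)]
  rw [filter_congr fun S _ => show Disjoint (S ∪ _) _ ↔ #(S ∩ Icc 1 (t + 1)) = 0 by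
    rw [disjoint_union_left, card_eq_zero, ← disjoint_iff_inter_eq_empty, and_iff_left hCD]]
  rw [card_filter_card_inter_powersetCard hDV (Nat.zero_le _), card_sdiff_of_subset hCU]
  simp only [Nat.card_Icc, Nat.choose_zero_right, one_mul]
  congr 1 <;> omega

theorem card_filter_famA1_card_inter_eq (hn : t + 1 ≤ n) (hk : 2 * t + 1 ≤ k) {b : Finset ℕ}
    (hb : b ∈ famA2 n k t) :
    #{a ∈ famA1 n k t | #(a ∩ b) = t} = k.choose t * (n - k - t - 1).choose (k - 2 * t - 1) := by
  obtain ⟨hbU, hbk, -, hbD⟩ := mem_famA2.mp hb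
  have hCU : Icc 1 (t + 1) ⊆ Icc 1 n := Icc_subset_Icc le_rfl hn
  have hbV : b ⊆ Icc 1 n \ Icc 1 (t + 1) := fun x hx =>
    mem_sdiff.mpr ⟨hbU hx, disjoint_left.mp hbD hx⟩
  rw [famA1, filter_filter, card_filter_superset_powersetCard hCU (by simp; omega)]
  rw [filter_congr fun S _ => show #((S ∪ _) ∩ b) = t ↔ #(S ∩ b) = t by
    rw [union_inter_distrib_right, disjoint_iff_inter_eq_empty.mp hbD.symm, union_empty]]
  rw [card_filter_card_inter_powersetCard hbV (by simp; omega), card_sdiff_of_subset hCU, hbk]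
  simp only [Nat.card_Icc]
  congr 2 <;> omega

end TwoStars

theorem construction_two_stars_general (n k t r : ℕ) (hk : 2 * t + 1 ≤ k)
    (hn : 2 * k + 2 ≤ n) (hr2 : r ≤ (n - 2 * t - 2).choose (k - t - 1)) :
    (∀ B ⊆ famA2 n k t, B.card = r →
      (famA1 n k t ∪ B).card = (n - t - 1).choose (k - t - 1) + r ∧
      rhoPairs t (famA1 n k t ∪ B)
        = r * k.choose t * (n - k - t - 1).choose (k - 2 * t - 1)) ∧
    rhoMin n k t ((n - t - 1).choose (k - t - 1) + r)
      ≤ r * k.choose t * (n - k - t - 1).choose (k - 2 * t - 1) := by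
  have hfamily : ∀ B ⊆ famA2 n k t, B.card = r →
      (famA1 n k t ∪ B).card = (n - t - 1).choose (k - t - 1) + r ∧
      rhoPairs t (famA1 n k t ∪ B)
        = r * k.choose t * (n - k - t - 1).choose (k - 2 * t - 1) := by
    intro B hB hBr
    have hdisj : Disjoint (famA1 n k t) B := disjoint_of_subset_right hB disjoint_famA1_famA2
    refine ⟨by rw [card_union_of_disjoint hdisj, card_famA1 (by omega) (by omega), hBr], ?_⟩
    rw [rhoPairs_union_of_pairwise hdisj pairwise_famA1 (pairwise_of_subset_famA2 hB),
      sum_const_nat fun b hb => card_filter_famA1_card_inter_eq (by omega) hk (hB hb), hBr,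
      mul_assoc]
  obtain ⟨B, hB, hBr⟩ := exists_subset_card_eq (s := famA2 n k t) (n := r)
    (by rwa [card_famA2 (by omega) (by omega)])
  obtain ⟨hcard, hrho⟩ := hfamily B hB hBr
  refine ⟨hfamily, Nat.sInf_le ⟨famA1 n k t ∪ B, ?_, hcard, hrho⟩⟩
  exact union_subset (filter_subset _ _) (hB.trans (filter_subset _ _))

/-- First extremal construction: adding `r` sets of the star `A₂` to the full star `A₁`
produces exactly `r ⋅ C(k,t) ⋅ C(n-k-t-1, k-2t-1)` pairs with intersection `t`. -/
theorem construction_two_stars (n k t r : ℕ) (ht : 1 ≤ t) (hk : 2 * t + 1 ≤ k)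
    (hn : 2 * k + 2 ≤ n) (hr1 : 1 ≤ r) (hr2 : r ≤ (n - 2 * t - 2).choose (k - t - 1)) :
    (∀ B ⊆ famA2 n k t, B.card = r →
      (famA1 n k t ∪ B).card = (n - t - 1).choose (k - t - 1) + r ∧
      rhoPairs t (famA1 n k t ∪ B)
        = r * k.choose t * (n - k - t - 1).choose (k - 2 * t - 1)) ∧
    rhoMin n k t ((n - t - 1).choose (k - t - 1) + r)
      ≤ r * k.choose t * (n - k - t - 1).choose (k - 2 * t - 1) :=
  construction_two_stars_general n k t r hk hn hr2
end

section
/- Let n, k, t, r be integers with 1 ≤ t, k ≥ 2t+1, n ≥ 2k+2, r ≥ 1 and C(n-2t-1, k-2t-1) + r ≤ C(n-2t-2, k-t-1). Define G₁ = {G ⊆ [n] : |G| = k, [t+1] ⊆ G, {t+2,…,2t+1} ⊄ G} and G₂ = {G ⊆ [n] : |G| = k, G ∩ [t+1] = ∅, {t+2,…,2t+2} ⊆ G}. Then for every G₂' ⊆ G₂ with |G₂'| = C(n-2t-1, k-2t-1) + r, the family F = G₁ ∪ G₂' has size C(n-t-1, k-t-1) + r and satisfies ρ(F) = (r + C(n-2t-1,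 k-2t-1))·(C(k,t) - 1)·C(n-k-t-1, k-2t-1). In particular, if in addition r > (C(k,t) - 1)·C(n-2t-1, k-2t-1), then ρ_{n,k,t}(C(n-t-1,k-t-1)+r) < r·C(k,t)·C(n-k-t-1, k-2t-1). -/
/-- `G₁ = {G ∈ C([n],k) : [t+1] ⊆ G, [t+2,2t+1] ⊄ G}`. -/
def famG1 (n k t : ℕ) : Finset (Finset ℕ) :=
  ((Finset.Icc 1 n).powersetCard k).filter
    (fun G => Finset.Icc 1 (t + 1) ⊆ G ∧ ¬ Finset.Icc (t + 2) (2 * t + 1) ⊆ G)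

/-- `G₂ = {G ∈ C([n],k) : G ∩ [t+1] = ∅, [t+2,2t+2] ⊆ G}`. -/
def famG2 (n k t : ℕ) : Finset (Finset ℕ) :=
  ((Finset.Icc 1 n).powersetCard k).filter
    (fun G => Disjoint G (Finset.Icc 1 (t + 1)) ∧ Finset.Icc (t + 2) (2 * t + 2) ⊆ G)

open Finset

lemma card_supersets {S T : Finset ℕ} (hTS : T ⊆ S) {k : ℕ} (hk : T.card ≤ k) :
    ((S.powersetCard k).filter (fun G => T ⊆ G)).card
      = (S.card - T.card).choose (k - T.card) := by
  rw [← Finset.card_sdiff_of_subset hTS, ← Finset.card_powersetCard]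
  apply Finset.card_bij' (fun G _ => G \ T) (fun H _ => H ∪ T)
  · intro G hG
    simp only [mem_filter, mem_powersetCard] at hG ⊢
    obtain ⟨⟨hGS, hGk⟩, hTG⟩ := hG
    exact ⟨sdiff_subset_sdiff hGS le_rfl, by rw [card_sdiff_of_subset hTG, hGk]⟩
  · intro H hH
    simp only [mem_filter, mem_powersetCard] at hH ⊢
    obtain ⟨hHS, hHc⟩ := hH
    have hd : Disjoint H T := disjoint_of_subset_left hHS sdiff_disjoint
    refine ⟨⟨union_subset (hHS.trans sdiff_subset) hTS, ?_⟩, subset_union_right⟩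
    rw [card_union_of_disjoint hd, hHc]
    omega
  · intro G hG
    simp only [mem_filter, mem_powersetCard] at hG
    exact sdiff_union_of_subset hG.2
  · intro H hH
    simp only [mem_powersetCard] at hH
    have hd : Disjoint H T := disjoint_of_subset_left hH.1 sdiff_disjoint
    rw [union_sdiff_right, sdiff_eq_self_of_disjoint hd]

lemma card_Icc' (a b : ℕ) : (Finset.Icc a b).card = b + 1 - a := Nat.card_Icc a b

lemma famG1_card (n k t : ℕ) (ht : 1 ≤ t) (hk : 2 * t + 1 ≤ k) (hn : 2 * k + 2 ≤ n) :
    (famG1 n k t).card + (n - 2 * t - 1).choose (k - 2 * t - 1)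
      = (n - t - 1).choose (k - t - 1) := by
  set s := (Finset.Icc 1 n).powersetCard k with hs
  have key := Finset.card_filter_add_card_filter_not
    (s := s.filter (fun G => Finset.Icc 1 (t+1) ⊆ G))
    (fun G => Finset.Icc (t + 2) (2 * t + 1) ⊆ G)
  have e1 : (s.filter (fun G => Finset.Icc 1 (t+1) ⊆ G)).filter
      (fun G => Finset.Icc (t + 2) (2 * t + 1) ⊆ G)
      = s.filter (fun G => Finset.Icc 1 (2*t+1) ⊆ G) := by
    rw [Finset.filter_filter]
    apply Finset.filter_congr
    intro G _
    have : Finset.Icc 1 (t+1) ∪ Finset.Icc (t+2) (2*t+1) = Finset.Icc 1 (2*t+1) := by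
      ext x; simp only [Finset.mem_union, Finset.mem_Icc]; omega
    rw [← this]
    simp [Finset.union_subset_iff]
  have e2 : (s.filter (fun G => Finset.Icc 1 (t+1) ⊆ G)).filter
      (fun G => ¬ Finset.Icc (t + 2) (2 * t + 1) ⊆ G) = famG1 n k t := by
    rw [Finset.filter_filter]; rfl
  have c1 : (s.filter (fun G => Finset.Icc 1 (2*t+1) ⊆ G)).card
      = (n - 2*t - 1).choose (k - 2*t - 1) := by
    have hsub : Finset.Icc 1 (2*t+1) ⊆ Finset.Icc 1 n := by
      apply Finset.Icc_subset_Icc le_rfl; omega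
    have := card_supersets hsub (k := k) (by rw [card_Icc']; omega)
    rw [this, card_Icc', card_Icc']
    congr 1 <;> omega
  have c2 : (s.filter (fun G => Finset.Icc 1 (t+1) ⊆ G)).card
      = (n - t - 1).choose (k - t - 1) := by
    have hsub : Finset.Icc 1 (t+1) ⊆ Finset.Icc 1 n := by
      apply Finset.Icc_subset_Icc le_rfl; omega
    have := card_supersets hsub (k := k) (by rw [card_Icc']; omega)
    rw [this, card_Icc', card_Icc']
    congr 1 <;> omega
  rw [e1, e2, c1, c2] at key
  omega

lemma famG2_card (n k t : ℕ) (ht : 1 ≤ t) (hk : 2 * t + 1 ≤ k) (hn : 2 * k + 2 ≤ n) :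
    (famG2 n k t).card = (n - 2 * t - 2).choose (k - t - 1) := by
  have e : famG2 n k t = ((Finset.Icc (t+2) n).powersetCard k).filter
      (fun G => Finset.Icc (t+2) (2*t+2) ⊆ G) := by
    ext G
    simp only [famG2, Finset.mem_filter, Finset.mem_powersetCard, Finset.disjoint_left]
    constructor
    · rintro ⟨⟨hGn, hGc⟩, hd, hsup⟩
      refine ⟨⟨fun x hx => ?_, hGc⟩, hsup⟩
      have h1 := hGn hx
      have h2 := hd hx
      simp only [Finset.mem_Icc] at *
      omega
    · rintro ⟨⟨hGn, hGc⟩, hsup⟩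
      refine ⟨⟨fun x hx => ?_, hGc⟩, fun x hx hx2 => ?_, hsup⟩
      · have := hGn hx; simp only [Finset.mem_Icc] at *; omega
      · have := hGn hx; simp only [Finset.mem_Icc] at *; omega
  rw [e]
  have hsub : Finset.Icc (t+2) (2*t+2) ⊆ Finset.Icc (t+2) n := by
    apply Finset.Icc_subset_Icc le_rfl; omega
  have := card_supersets hsub (k := k) (by rw [card_Icc']; omega)
  rw [this, card_Icc', card_Icc']
  congr 1 <;> omega

lemma inner_count (n k t : ℕ) (ht : 1 ≤ t) (hk : 2 * t + 1 ≤ k) (hn : 2 * k + 2 ≤ n)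
    {B : Finset ℕ} (hB : B ∈ famG2 n k t) :
    ((famG1 n k t).filter (fun A => (A ∩ B).card = t)).card
      = (k.choose t - 1) * (n - k - t - 1).choose (k - 2 * t - 1) := by
  simp only [famG2, Finset.mem_filter, Finset.mem_powersetCard] at hB
  obtain ⟨⟨hBn, hBk⟩, hBd, hBsup⟩ := hB
  set I := Finset.Icc 1 (t+1) with hI
  have hIcard : I.card = t + 1 := by rw [hI, card_Icc']; omega
  have hIB : Disjoint I B := hBd.symm
  have hIn : I ⊆ Finset.Icc 1 n := Finset.Icc_subset_Icc le_rfl (by omega)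
  have hIBn : I ∪ B ⊆ Finset.Icc 1 n := Finset.union_subset hIn hBn
  have hIBcard : (I ∪ B).card = t + 1 + k := by
    rw [Finset.card_union_of_disjoint hIB, hIcard, hBk]
  have hJB : Finset.Icc (t+2) (2*t+1) ⊆ B := by
    refine Finset.Subset.trans ?_ hBsup
    apply Finset.Icc_subset_Icc le_rfl; omega
  have hJcard : (Finset.Icc (t+2) (2*t+1)).card = t := by rw [card_Icc']; omega
  set W := Finset.Icc 1 n \ (I ∪ B) with hW
  have hWcard : W.card = n - k - t - 1 := by
    rw [hW, Finset.card_sdiff_of_subset hIBn, card_Icc', hIBcard]; omega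
  have key : ((famG1 n k t).filter (fun A => (A ∩ B).card = t)).card
      = (((B.powersetCard t).erase (Finset.Icc (t+2) (2*t+1))) ×ˢ
          (W.powersetCard (k - 2*t - 1))).card := by
    apply Finset.card_bij' (fun A _ => (A ∩ B, A \ (I ∪ B)))
      (fun P _ => I ∪ P.1 ∪ P.2)
    · -- forward membership
      intro A hA
      simp only [famG1, Finset.mem_filter, Finset.mem_powersetCard] at hA
      obtain ⟨⟨⟨hAn, hAk⟩, hIA, hnot⟩, hABt⟩ := hA
      simp only [Finset.mem_product, Finset.mem_erase, Finset.mem_powersetCard]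
      have hAIB : A ∩ (I ∪ B) = I ∪ (A ∩ B) := by
        rw [Finset.inter_union_distrib_left, Finset.inter_eq_right.mpr hIA]
      have hAIBcard : (A ∩ (I ∪ B)).card = 2*t + 1 := by
        rw [hAIB, Finset.card_union_of_disjoint
          (Finset.disjoint_of_subset_right Finset.inter_subset_right hIB), hIcard, hABt]
        omega
      refine ⟨⟨?_, Finset.inter_subset_right, hABt⟩, ?_, ?_⟩
      · intro hEq
        exact hnot (hEq ▸ Finset.inter_subset_left)
      · exact Finset.sdiff_subset_sdiff hAn le_rfl
      · have := Finset.card_sdiff_add_card_inter A (I ∪ B)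
        omega
    · -- backward membership
      rintro ⟨T, R⟩ hP
      simp only [Finset.mem_product, Finset.mem_erase, Finset.mem_powersetCard] at hP
      obtain ⟨⟨hTne, hTB, hTt⟩, hRW, hRc⟩ := hP
      have hRIB : Disjoint R (I ∪ B) := by
        rw [Finset.disjoint_left]
        intro x hx
        have := hRW hx
        rw [hW, Finset.mem_sdiff] at this
        exact this.2
      have hAB : (I ∪ T ∪ R) ∩ B = T := by
        ext x
        simp only [Finset.mem_inter, Finset.mem_union]
        constructor
        · rintro ⟨(hx | hx) | hx, hxB⟩
          · exact absurd hxB (Finset.disjoint_left.mp hIB hx)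
          · exact hx
          · exact absurd (Finset.mem_union_right I hxB)
              (Finset.disjoint_left.mp hRIB hx)
        · intro hx; exact ⟨Or.inl (Or.inr hx), hTB hx⟩
      simp only [famG1, Finset.mem_filter, Finset.mem_powersetCard]
      have hITd : Disjoint I T := Finset.disjoint_of_subset_right hTB hIB
      have hITRd : Disjoint (I ∪ T) R := by
        refine Disjoint.symm (Finset.disjoint_of_subset_right ?_ hRIB)
        exact Finset.union_subset_union le_rfl hTB
      refine ⟨⟨⟨?_, ?_⟩, ?_, ?_⟩, ?_⟩
      · exact Finset.union_subset (Finset.union_subset hIn (hTB.trans hBn))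
          (hRW.trans Finset.sdiff_subset)
      · rw [Finset.card_union_of_disjoint hITRd, Finset.card_union_of_disjoint hITd,
          hIcard, hTt, hRc]
        omega
      · exact (Finset.subset_union_left).trans Finset.subset_union_left
      · intro hcon
        have hJT : Finset.Icc (t+2) (2*t+1) ⊆ T := by
          rw [← hAB]
          exact Finset.subset_inter hcon hJB
        exact hTne (Finset.eq_of_subset_of_card_le hJT (by omega)).symm
      · rw [hAB, hTt]
    · -- left inverse
      intro A hA
      simp only [famG1, Finset.mem_filter, Finset.mem_powersetCard] at hA
      obtain ⟨⟨⟨hAn, hAk⟩, hIA, hnot⟩, hABt⟩ := hA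
      have hAIB : A ∩ (I ∪ B) = I ∪ (A ∩ B) := by
        rw [Finset.inter_union_distrib_left, Finset.inter_eq_right.mpr hIA]
      show I ∪ (A ∩ B) ∪ (A \ (I ∪ B)) = A
      rw [← hAIB]
      ext x
      simp only [Finset.mem_union, Finset.mem_inter, Finset.mem_sdiff]
      tauto
    · -- right inverse
      rintro ⟨T, R⟩ hP
      simp only [Finset.mem_product, Finset.mem_erase, Finset.mem_powersetCard] at hP
      obtain ⟨⟨hTne, hTB, hTt⟩, hRW, hRc⟩ := hP
      have hRIB : ∀ x ∈ R, x ∉ I ∪ B := by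
        intro x hx
        have := hRW hx
        rw [hW, Finset.mem_sdiff] at this
        exact this.2
      have hAB : (I ∪ T ∪ R) ∩ B = T := by
        ext x
        simp only [Finset.mem_inter, Finset.mem_union]
        constructor
        · rintro ⟨(hx | hx) | hx, hxB⟩
          · exact absurd hxB (Finset.disjoint_left.mp hIB hx)
          · exact hx
          · exact absurd (Finset.mem_union_right I hxB) (hRIB x hx)
        · intro hx; exact ⟨Or.inl (Or.inr hx), hTB hx⟩
      have hR2 : (I ∪ T ∪ R) \ (I ∪ B) = R := by
        ext x
        simp only [Finset.mem_sdiff, Finset.mem_union]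
        constructor
        · rintro ⟨(hx | hx) | hx, hni⟩
          · exact absurd (Or.inl hx) hni
          · exact absurd (Or.inr (hTB hx)) hni
          · exact hx
        · intro hx
          refine ⟨Or.inr hx, ?_⟩
          have := hRIB x hx
          simpa [Finset.mem_union] using this
      simp only [Prod.mk.injEq]
      exact ⟨hAB, hR2⟩
  rw [key, Finset.card_product, Finset.card_erase_of_mem
    (Finset.mem_powersetCard.mpr ⟨hJB, hJcard⟩),
    Finset.card_powersetCard, Finset.card_powersetCard, hBk, hWcard]

lemma fam_disj (n k t : ℕ) {A B : Finset ℕ} (hA : A ∈ famG1 n k t) (hB : B ∈ famG2 n k t) :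
    A ≠ B := by
  simp only [famG1, famG2, Finset.mem_filter] at hA hB
  intro h
  have h1 : (1 : ℕ) ∈ A := hA.2.1 (by simp [Finset.mem_Icc])
  have h2 : (1 : ℕ) ∉ B :=
    Finset.disjoint_left.mp hB.2.1.symm (by simp [Finset.mem_Icc])
  exact h2 (h ▸ h1)

lemma rho_sum (n k t : ℕ)
    {G2' : Finset (Finset ℕ)} (hsub : G2' ⊆ famG2 n k t) :
    rhoPairs t (famG1 n k t ∪ G2')
      = ∑ B ∈ G2', ((famG1 n k t).filter (fun A => (A ∩ B).card = t)).card := by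
  rw [← Finset.card_sigma]
  unfold rhoPairs
  symm
  apply Finset.card_bij (fun p _ => ({p.2, p.1} : Finset (Finset ℕ)))
  · rintro ⟨B, A⟩ hp
    simp only [Finset.mem_sigma, Finset.mem_filter] at hp
    obtain ⟨hBG, hAG, hABt⟩ := hp
    have hne : A ≠ B := fam_disj n k t hAG (hsub hBG)
    simp only [Finset.mem_filter, Finset.mem_powersetCard]
    refine ⟨⟨?_, ?_⟩, A, ?_, B, ?_, hne, hABt⟩
    · intro x hx
      simp only [Finset.mem_insert, Finset.mem_singleton] at hx
      rcases hx with h | h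
      · exact h ▸ Finset.mem_union_left _ hAG
      · exact h ▸ Finset.mem_union_right _ hBG
    · rw [Finset.card_insert_of_notMem (by simp [hne]), Finset.card_singleton]
    · simp
    · simp
  · rintro ⟨B, A⟩ hp ⟨B', A'⟩ hp' heq
    simp only [Finset.mem_sigma, Finset.mem_filter] at hp hp'
    obtain ⟨hBG, hAG, -⟩ := hp
    obtain ⟨hB'G, hA'G, -⟩ := hp'
    have hBmem : B ∈ ({A', B'} : Finset (Finset ℕ)) := heq ▸ (by simp)
    have hAmem : A ∈ ({A', B'} : Finset (Finset ℕ)) := heq ▸ (by simp)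
    simp only [Finset.mem_insert, Finset.mem_singleton] at hBmem hAmem
    have hBB' : B = B' := by
      rcases hBmem with h | h
      · exact absurd h.symm (fam_disj n k t hA'G (hsub hBG))
      · exact h
    have hAA' : A = A' := by
      rcases hAmem with h | h
      · exact h
      · exact absurd (h.trans hBB'.symm) (fam_disj n k t hAG (hsub hBG))
    subst hBB'; subst hAA'; rfl
  · intro P hP
    simp only [Finset.mem_filter, Finset.mem_powersetCard] at hP
    obtain ⟨⟨hPsub, hP2⟩, A, hAP, B, hBP, hne, hABt⟩ := hP
    have hPeq : P = {A, B} := by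
      apply (Finset.eq_of_subset_of_card_le ?_ ?_).symm
      · intro x hx
        simp only [Finset.mem_insert, Finset.mem_singleton] at hx
        rcases hx with h | h
        · exact h ▸ hAP
        · exact h ▸ hBP
      · rw [hP2, Finset.card_insert_of_notMem (by simp [hne]), Finset.card_singleton]
    have hmemA := hPsub hAP
    have hmemB := hPsub hBP
    rw [Finset.mem_union] at hmemA hmemB
    have hG1card : ∀ {X Y : Finset ℕ}, X ∈ famG1 n k t → Y ∈ famG1 n k t →
        (X ∩ Y).card ≠ t := by
      intro X Y hX hY
      simp only [famG1, Finset.mem_filter] at hX hY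
      have hsub2 : Finset.Icc 1 (t+1) ⊆ X ∩ Y := Finset.subset_inter hX.2.1 hY.2.1
      have := Finset.card_le_card hsub2
      rw [card_Icc'] at this
      omega
    have hG2card : ∀ {X Y : Finset ℕ}, X ∈ G2' → Y ∈ G2' → (X ∩ Y).card ≠ t := by
      intro X Y hX hY
      have hX' := hsub hX; have hY' := hsub hY
      simp only [famG2, Finset.mem_filter] at hX' hY'
      have hsub2 : Finset.Icc (t+2) (2*t+2) ⊆ X ∩ Y :=
        Finset.subset_inter hX'.2.2 hY'.2.2
      have := Finset.card_le_card hsub2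
      rw [card_Icc'] at this
      omega
    rcases hmemA with hA1 | hA2
    · rcases hmemB with hB1 | hB2
      · exact absurd hABt (hG1card hA1 hB1)
      · refine ⟨⟨B, A⟩, ?_, hPeq.symm⟩
        simp only [Finset.mem_sigma, Finset.mem_filter]
        exact ⟨hB2, hA1, hABt⟩
    · rcases hmemB with hB1 | hB2
      · refine ⟨⟨A, B⟩, ?_, ?_⟩
        · simp only [Finset.mem_sigma, Finset.mem_filter]
          exact ⟨hA2, hB1, by rw [Finset.inter_comm]; exact hABt⟩
        · rw [hPeq, Finset.pair_comm]
      · exact absurd hABt (hG2card hA2 hB2)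

/-- Second extremal construction, showing the bound on `r` in Theorem 6 is optimal. -/
theorem construction_beating_exact (n k t r : ℕ) (ht : 1 ≤ t) (hk : 2 * t + 1 ≤ k)
    (hn : 2 * k + 2 ≤ n) (hr1 : 1 ≤ r)
    (hr2 : (n - 2 * t - 1).choose (k - 2 * t - 1) + r
      ≤ (n - 2 * t - 2).choose (k - t - 1)) :
    (∀ G2' ⊆ famG2 n k t,
      G2'.card = (n - 2 * t - 1).choose (k - 2 * t - 1) + r →
      (famG1 n k t ∪ G2').card = (n - t - 1).choose (k - t - 1) + r ∧
      rhoPairs t (famG1 n k t ∪ G2')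
        = (r + (n - 2 * t - 1).choose (k - 2 * t - 1)) * (k.choose t - 1)
            * (n - k - t - 1).choose (k - 2 * t - 1)) ∧
    ((k.choose t - 1) * (n - 2 * t - 1).choose (k - 2 * t - 1) < r →
      rhoMin n k t ((n - t - 1).choose (k - t - 1) + r)
        < r * k.choose t * (n - k - t - 1).choose (k - 2 * t - 1)) := by
  have main : ∀ G2' ⊆ famG2 n k t,
      G2'.card = (n - 2 * t - 1).choose (k - 2 * t - 1) + r →
      (famG1 n k t ∪ G2').card = (n - t - 1).choose (k - t - 1) + r ∧
      rhoPairs t (famG1 n k t ∪ G2')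
        = (r + (n - 2 * t - 1).choose (k - 2 * t - 1)) * (k.choose t - 1)
            * (n - k - t - 1).choose (k - 2 * t - 1) := by
    intro G2' hsub hcard
    have hdisj : Disjoint (famG1 n k t) G2' := by
      rw [Finset.disjoint_left]
      intro A hA hA2
      exact fam_disj n k t hA (hsub hA2) rfl
    constructor
    · rw [Finset.card_union_of_disjoint hdisj, hcard]
      have := famG1_card n k t ht hk hn
      omega
    · rw [rho_sum n k t hsub]
      rw [Finset.sum_congr rfl (fun B hB => inner_count n k t ht hk hn (hsub hB))]
      rw [Finset.sum_const, smul_eq_mul, hcard]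
      ring
  refine ⟨main, ?_⟩
  intro hgt
  have hG2c : (n - 2 * t - 1).choose (k - 2 * t - 1) + r ≤ (famG2 n k t).card := by
    rw [famG2_card n k t ht hk hn]; exact hr2
  obtain ⟨G2', hsub, hcard⟩ := Finset.exists_subset_card_eq hG2c
  obtain ⟨hc, hrho⟩ := main G2' hsub hcard
  have hFsub : famG1 n k t ∪ G2' ⊆ (Finset.Icc 1 n).powersetCard k := by
    apply Finset.union_subset
    · exact Finset.filter_subset _ _
    · exact hsub.trans (Finset.filter_subset _ _)
  have hle : rhoMin n k t ((n - t - 1).choose (k - t - 1) + r)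
      ≤ rhoPairs t (famG1 n k t ∪ G2') :=
    Nat.sInf_le ⟨famG1 n k t ∪ G2', hFsub, hc, rfl⟩
  apply lt_of_le_of_lt (hle.trans_eq hrho)
  -- arithmetic
  set C := (n - 2 * t - 1).choose (k - 2 * t - 1)
  set D := (n - k - t - 1).choose (k - 2 * t - 1)
  set m := k.choose t with hm
  have hm1 : 1 ≤ m := Nat.choose_pos (by omega)
  have hD : 0 < D := Nat.choose_pos (by omega)
  have h1 : (r + C) * (m - 1) < r * m := by
    have e : m = (m - 1) + 1 := by omega
    calc (r + C) * (m - 1) = r * (m - 1) + C * (m - 1) := by ring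
      _ < r * (m - 1) + r := Nat.add_lt_add_left (by rw [Nat.mul_comm]; exact hgt) _
      _ = r * ((m - 1) + 1) := by ring
      _ = r * m := by rw [← e]
  exact (Nat.mul_lt_mul_right hD).mpr h1
end
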